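/- arXiv:2005.11536 — 3 statements merged into one kernel-verified Lean document; each statement's English description precedes it below -/
import Mathlib

section
/- Let λ = (λ_1,…,λ_n) ∈ ℝⁿ with λ_1 > λ_2 > … > λ_n, and let q = ᵗp(λ⁻) be the dual of the Robinson–Schensted shape of λ⁻. Then q_j = 0 for j ≥ 3 (the shape has at most two columns), q_1 + q_2 = 2n, q_1^odd + q_2^odd = n, and n² − F_b(λ⁻) = q_2^odd · (2n + 1 − 2·q_2^odd), where F_b(λ⁻) = Σ_{i≥1}(i−1)·p(λ⁻)_i^odd = (q_1^odd)² + q_2^odd(q_2^odd − 1). -/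
/-- Greene invariant `c_k(x)` of the length-`N` sequence `x` (positions `1,…,N`). -/
noncomputable def greeneC {α : Type*} [LinearOrder α] (N : ℕ) (x : ℕ → α) (k : ℕ) : ℕ :=
  sSup {m : ℕ | ∃ S : Finset ℕ, (∀ i ∈ S, 1 ≤ i ∧ i ≤ N) ∧ m = S.card ∧
    ∃ f : ℕ → Fin k, ∀ i ∈ S, ∀ j ∈ S, i < j → f i = f j → x i ≤ x j}

/-- The Robinson–Schensted shape of `x`, via Greene's theorem:
`p(x)_k = c_k(x) − c_{k−1}(x)`. -/
noncomputable def rsShape {α : Type*} [LinearOrder α] (N : ℕ) (x : ℕ → α) (k : ℕ) : ℕ :=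
  greeneC N x k - greeneC N x (k - 1)

/-- For a length-`n` sequence `x` (positions `1,…,n`), the length-`2n` sequence
`x⁻ = (x_1,…,x_n,−x_n,…,−x_1)` (positions `1,…,2n`). -/
def supMinus (n : ℕ) (x : ℕ → ℝ) : ℕ → ℝ := fun i =>
  if i ≤ n then x i else -x (2 * n + 1 - i)

/-- The dual partition: `q_j = #{i ≥ 1 : p_i ≥ j}`. -/
noncomputable def dualPart (p : ℕ → ℕ) (j : ℕ) : ℕ :=
  Set.ncard {i : ℕ | 1 ≤ i ∧ j ≤ p i}

/-- The number of odd boxes in row `i` of the Young diagram of `p`. -/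
def rowOdd (p : ℕ → ℕ) (i : ℕ) : ℕ :=
  ((Finset.Icc 1 (p i)).filter fun j => Odd (i + j)).card

/-- The number of odd boxes in column `j`, where `q` is the dual partition. -/
def colOdd (q : ℕ → ℕ) (j : ℕ) : ℕ :=
  ((Finset.Icc 1 (q j)).filter fun i => Odd (i + j)).card

/-- The Robinson–Schensted shape `p(λ⁻)` of `λ⁻`. -/
noncomputable def pShape (n : ℕ) (lam : ℕ → ℝ) : ℕ → ℕ :=
  rsShape (2 * n) (supMinus n lam)

/-- The dual partition `q = ᵗp(λ⁻)`. -/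
noncomputable def qShape (n : ℕ) (lam : ℕ → ℝ) : ℕ → ℕ :=
  dualPart (pShape n lam)

/-- `F_b(λ⁻) = Σ_{i≥1} (i−1)·p(λ⁻)_i^odd`. -/
noncomputable def Fb (n : ℕ) (lam : ℕ → ℝ) : ℕ :=
  ∑ᶠ (i : ℕ) (_ : 1 ≤ i), (i - 1) * rowOdd (pShape n lam) i

/-!
Since `λ` is strictly decreasing, a weakly increasing subsequence of `λ⁻` has at most one entry in
each half, and a two-term one pairs some `λ_i` with some `-λ_j` where `λ_i + λ_j ≤ 0`. Hence a
union of `k` such subsequences has at most `k + min(k, M)` terms, `M` the largest number of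
disjoint such pairs, and a Hall-type count shows that `M` pairs can always be found among the
`M` smallest entries of `λ`, matched in reverse order. This realizes Greene's invariants
`c_k(λ⁻) = min(k + min(k, M), 2n)`, so `p(λ⁻)` has two columns, of lengths `2n - M` and `M`.
Then `q₁^odd = ⌊(2n - M)/2⌋`, `q₂^odd = ⌈M/2⌉`, and `F_b(λ⁻)` sums `i - 1` over the even rows
`i` of the first column and the odd rows of the second: `(q₁^odd)² + q₂^odd (q₂^odd - 1)`.
-/

namespace Finset

lemma filter_even_Icc_one (m : ℕ) :
    (Icc 1 m).filter Even = (range (m / 2)).image (fun t => 2 * t + 2) := by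
  ext i
  simp only [mem_filter, mem_Icc, mem_image, mem_range, Nat.even_iff]
  constructor
  · intro h
    exact ⟨i / 2 - 1, by omega, by omega⟩
  · rintro ⟨t, ht, rfl⟩
    omega

lemma filter_odd_Icc_one (m : ℕ) :
    (Icc 1 m).filter Odd = (range ((m + 1) / 2)).image (fun t => 2 * t + 1) := by
  ext i
  simp only [mem_filter, mem_Icc, mem_image, mem_range, Nat.odd_iff]
  constructor
  · intro h
    exact ⟨i / 2, by omega, by omega⟩
  · rintro ⟨t, ht, rfl⟩
    omega

lemma card_filter_even_Icc_one (m : ℕ) : ((Icc 1 m).filter Even).card = m / 2 := by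
  rw [filter_even_Icc_one, card_image_of_injective _ (fun a b h => by simpa using h), card_range]

lemma card_filter_odd_Icc_one (m : ℕ) : ((Icc 1 m).filter Odd).card = (m + 1) / 2 := by
  rw [filter_odd_Icc_one, card_image_of_injective _ (fun a b h => by simpa using h), card_range]

lemma sum_filter_even_Icc_one_pred (m : ℕ) :
    ∑ i ∈ (Icc 1 m).filter Even, (i - 1) = (m / 2) ^ 2 := by
  rw [filter_even_Icc_one, sum_image (fun a _ b _ h => by simpa using h)]
  induction m / 2 with
  | zero => rfl
  | succ a ih => rw [sum_range_succ, ih]; ring_nf; omega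

lemma sum_filter_odd_Icc_one_pred (m : ℕ) :
    ∑ i ∈ (Icc 1 m).filter Odd, (i - 1) = (m + 1) / 2 * ((m + 1) / 2 - 1) := by
  rw [filter_odd_Icc_one, sum_image (fun a _ b _ h => by simpa using h)]
  simp only [Nat.add_sub_cancel]
  rw [← mul_sum, mul_comm, sum_range_id_mul_two, mul_comm]

lemma card_sub_le_card_filter_le {γ : Type*} {T : Finset γ} {a : γ → ℕ} {n : ℕ}
    (ha : ∀ c ∈ T, a c ≤ n) (hinj : Set.InjOn a T) (t : ℕ) :
    T.card - (n - t) ≤ (T.filter (a · ≤ t)).card := by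
  have hbig : (T.filter (¬ a · ≤ t)).card ≤ (Ioc t n).card :=
    card_le_card_of_injOn a
      (fun c hc => by
        simp only [coe_filter, Set.mem_ofPred_eq] at hc
        simp [ha c hc.1]
        omega)
      (hinj.mono (coe_subset.mpr (filter_subset _ _)))
  have := T.card_filter_add_card_filter_not (a · ≤ t)
  simp only [Nat.card_Ioc] at hbig
  omega

lemma card_le_of_forall_mem_Icc_one {S : Finset ℕ} {N : ℕ} (hS : ∀ i ∈ S, 1 ≤ i ∧ i ≤ N) :
    S.card ≤ N := by
  simpa using card_le_card (t := Icc 1 N) fun i hi => mem_Icc.mpr (hS i hi)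

lemma card_add_card_le_card_add_card_filter_eq {α κ : Type*} [Fintype κ] [DecidableEq κ]
    {L R : Finset α} {f : α → κ} (hL : Set.InjOn f L) (hR : Set.InjOn f R) :
    L.card + R.card ≤ Fintype.card κ + ((L ×ˢ R).filter fun p => f p.1 = f p.2).card := by
  rw [← card_image_of_injOn hL, ← card_image_of_injOn hR, ← card_union_add_card_inter]
  gcongr
  · exact card_le_univ _
  · calc (L.image f ∩ R.image f).card
        ≤ (((L ×ˢ R).filter fun p => f p.1 = f p.2).image (f ∘ Prod.fst)).card := by
          refine card_le_card fun c hc => ?_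
          obtain ⟨⟨i, hi, rfl⟩, ⟨j, hj, hji⟩⟩ := by simpa using hc
          exact mem_image.mpr ⟨(i, j), by simp [hi, hj, hji], rfl⟩
      _ ≤ _ := card_image_le

end Finset

lemma rowOdd_of_le_two {p : ℕ → ℕ} {i : ℕ} (h : p i ≤ 2) :
    rowOdd p i = (if 1 ≤ p i ∧ Even i then 1 else 0) + (if 2 ≤ p i ∧ Odd i then 1 else 0) := by
  rw [rowOdd, Finset.card_filter]
  generalize p i = r at h ⊢
  interval_cases r
  · simp
  · rw [Finset.Icc_self, Finset.sum_singleton]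
    simp [Nat.odd_add_one]
  · rw [show Finset.Icc 1 2 = {1, 2} by rfl, Finset.sum_pair (by norm_num)]
    simp [Nat.odd_add_one]

lemma colOdd_one (q : ℕ → ℕ) : colOdd q 1 = q 1 / 2 := by
  rw [colOdd, ← Finset.card_filter_even_Icc_one]
  simp [Nat.odd_add_one]

lemma colOdd_two (q : ℕ → ℕ) : colOdd q 2 = (q 2 + 1) / 2 := by
  rw [colOdd, ← Finset.card_filter_odd_Icc_one]
  simp [Nat.odd_add]

/-- The partition with columns of lengths `c₁ ≥ c₂`, rows indexed from `1`. -/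
def twoColumn (c₁ c₂ : ℕ) (i : ℕ) : ℕ :=
  if 1 ≤ i ∧ i ≤ c₂ then 2 else if 1 ≤ i ∧ i ≤ c₁ then 1 else 0

namespace twoColumn

variable {c₁ c₂ : ℕ}

lemma dualPart_one (h : c₂ ≤ c₁) : dualPart (twoColumn c₁ c₂) 1 = c₁ := by
  rw [dualPart, show {i | 1 ≤ i ∧ 1 ≤ twoColumn c₁ c₂ i} = Set.Icc 1 c₁ by
    ext i; simp only [twoColumn, Set.mem_ofPred_eq, Set.mem_Icc]; split_ifs <;> omega]
  simp

lemma dualPart_two : dualPart (twoColumn c₁ c₂) 2 = c₂ := by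
  rw [dualPart, show {i | 1 ≤ i ∧ 2 ≤ twoColumn c₁ c₂ i} = Set.Icc 1 c₂ by
    ext i; simp only [twoColumn, Set.mem_ofPred_eq, Set.mem_Icc]; split_ifs <;> omega]
  simp

lemma dualPart_of_three_le {j : ℕ} (hj : 3 ≤ j) : dualPart (twoColumn c₁ c₂) j = 0 := by
  rw [dualPart, show {i | 1 ≤ i ∧ j ≤ twoColumn c₁ c₂ i} = ∅ by
    ext i; simp only [twoColumn, Set.mem_ofPred_eq, Set.mem_empty_iff_false, iff_false]
    split_ifs <;> omega]
  exact Set.ncard_empty ℕ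

lemma finsum_pred_mul_rowOdd (h : c₂ ≤ c₁) :
    ∑ᶠ (i : ℕ) (_ : 1 ≤ i), (i - 1) * rowOdd (twoColumn c₁ c₂) i =
      (c₁ / 2) ^ 2 + (c₂ + 1) / 2 * ((c₂ + 1) / 2 - 1) := by
  set A := (Finset.Icc 1 c₁).filter Even
  set B := (Finset.Icc 1 c₂).filter Odd
  have hrow (i : ℕ) : (i - 1) * rowOdd (twoColumn c₁ c₂) i =
      (if i ∈ A then i - 1 else 0) + (if i ∈ B then i - 1 else 0) := by
    rw [rowOdd_of_le_two (by unfold twoColumn; split_ifs <;> omega)]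
    simp only [A, B, twoColumn, Finset.mem_filter, Finset.mem_Icc, Nat.even_iff, Nat.odd_iff]
    split_ifs <;> omega
  have hA : A ⊆ Finset.Icc 1 c₁ := Finset.filter_subset _ _
  have hB : B ⊆ Finset.Icc 1 c₁ := (Finset.filter_subset _ _).trans (Finset.Icc_subset_Icc_right h)
  rw [finsum_cond_eq_sum_of_cond_iff _ (t := Finset.Icc 1 c₁) fun {i} hi => by
    rw [hrow] at hi
    have : i ∈ A ∨ i ∈ B := by by_contra! hAB; simp [hAB] at hi
    simp only [A, B, Finset.mem_filter, Finset.mem_Icc] at this ⊢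
    omega]
  simp only [hrow, Finset.sum_add_distrib, Finset.sum_ite_mem, Finset.inter_eq_right.mpr hB,
    Finset.inter_eq_right.mpr hA]
  rw [Finset.sum_filter_even_Icc_one_pred, Finset.sum_filter_odd_Icc_one_pred]

end twoColumn

def TailPairsNonpos (n : ℕ) (lam : ℕ → ℝ) (m : ℕ) : Prop :=
  ∀ k, 1 ≤ k → k ≤ m → lam (n - m + k) + lam (n + 1 - k) ≤ 0

open Classical in
/-- The length of the second column of `p(λ⁻)`: the largest number of pairs `(i, j)`, with
distinct `i`s and distinct `j`s, such that `λ_i + λ_j ≤ 0`; such pairs can always be found by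
pairing off the smallest entries. -/
noncomputable def pairingNumber (n : ℕ) (lam : ℕ → ℝ) : ℕ :=
  Nat.findGreatest (TailPairsNonpos n lam) n

section Pairing

variable {n : ℕ} {lam : ℕ → ℝ}

lemma TailPairsNonpos.mono (hlam : AntitoneOn lam (Set.Icc 1 n)) {m m' : ℕ} (hm : m ≤ n)
    (hm' : m' ≤ m) (h : TailPairsNonpos n lam m) : TailPairsNonpos n lam m' := by
  intro k hk1 hk2
  have := hlam (a := n - m + k) (b := n - m' + k) ⟨by omega, by omega⟩ ⟨by omega, by omega⟩
    (by omega)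
  linarith [h k hk1 (by omega)]

lemma pairingNumber_le : pairingNumber n lam ≤ n := by
  classical
  exact Nat.findGreatest_le n

lemma tailPairsNonpos_pairingNumber : TailPairsNonpos n lam (pairingNumber n lam) := by
  classical
  exact Nat.findGreatest_spec (P := TailPairsNonpos n lam) (Nat.zero_le n)
    (fun k hk1 hk2 => absurd hk2 (by omega))

lemma card_le_pairingNumber (hlam : AntitoneOn lam (Set.Icc 1 n)) {γ : Type*}
    {T : Finset γ} {a b : γ → ℕ} (ha : Set.MapsTo a T (Set.Icc 1 n))
    (hb : Set.MapsTo b T (Set.Icc 1 n)) (hai : Set.InjOn a T) (hbi : Set.InjOn b T)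
    (hab : ∀ c ∈ T, lam (a c) + lam (b c) ≤ 0) :
    T.card ≤ pairingNumber n lam := by
  classical
  have hTn : T.card ≤ n := by
    simpa using Finset.card_le_card_of_injOn a (t := Finset.Icc 1 n) (by simpa using ha) hai
  refine Nat.le_findGreatest hTn fun k hk1 hk2 => ?_
  have hA := Finset.card_sub_le_card_filter_le (fun c hc => (ha hc).2) hai (n - T.card + k)
  have hB := Finset.card_sub_le_card_filter_le (fun c hc => (hb hc).2) hbi (n + 1 - k)
  obtain ⟨c, hc⟩ := Finset.inter_nonempty_of_card_lt_card_add_card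
    (Finset.filter_subset (a · ≤ n - T.card + k) T) (Finset.filter_subset (b · ≤ n + 1 - k) T)
    (by omega)
  simp only [Finset.mem_inter, Finset.mem_filter] at hc
  obtain ⟨⟨hcT, hac⟩, -, hbc⟩ := hc
  have h1 := hlam (ha hcT) ⟨by omega, by omega⟩ hac
  have h2 := hlam (hb hcT) ⟨by omega, by omega⟩ hbc
  linarith [hab c hcT]

lemma card_filter_eq_le_pairingNumber (hlam : AntitoneOn lam (Set.Icc 1 n)) {κ : Type*}
    [DecidableEq κ] {f : ℕ → κ} {L R : Finset ℕ} (hL : ∀ i ∈ L, 1 ≤ i ∧ i ≤ n)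
    (hR : ∀ j ∈ R, n < j ∧ j ≤ 2 * n) (hfL : Set.InjOn f L) (hfR : Set.InjOn f R)
    (hneg : ∀ i ∈ L, ∀ j ∈ R, f i = f j → lam i + lam (2 * n + 1 - j) ≤ 0) :
    ((L ×ˢ R).filter fun p => f p.1 = f p.2).card ≤ pairingNumber n lam := by
  have hmem {p : ℕ × ℕ} (hp : p ∈ (L ×ˢ R).filter fun p => f p.1 = f p.2) :
      p.1 ∈ L ∧ p.2 ∈ R ∧ f p.1 = f p.2 := by
    simpa only [Finset.mem_filter, Finset.mem_product, and_assoc] using hp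
  refine card_le_pairingNumber hlam (a := Prod.fst) (b := fun p => 2 * n + 1 - p.2)
    (fun p hp => hL _ (hmem hp).1) (fun p hp => ?_) (fun p hp p' hp' h => ?_)
    (fun p hp p' hp' h => ?_) (fun p hp => hneg _ (hmem hp).1 _ (hmem hp).2.1 (hmem hp).2.2)
  · have := hR _ (hmem hp).2.1
    exact show 1 ≤ 2 * n + 1 - p.2 ∧ 2 * n + 1 - p.2 ≤ n by omega
  · exact Prod.ext h (hfR (hmem hp).2.1 (hmem hp').2.1
      ((hmem hp).2.2.symm.trans (h ▸ (hmem hp').2.2)))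
  · have h₂ : p.2 = p'.2 := by
      have := hR _ (hmem hp).2.1
      have := hR _ (hmem hp').2.1
      simp only at h
      omega
    exact Prod.ext (hfL (hmem hp).1 (hmem hp').1
      ((hmem hp).2.2.trans (h₂ ▸ (hmem hp').2.2.symm))) h₂

end Pairing

section Greene

variable {α : Type*} [LinearOrder α] {N k : ℕ} {x : ℕ → α}

lemma le_greeneC {S : Finset ℕ} (hS : ∀ i ∈ S, 1 ≤ i ∧ i ≤ N) (g : ℕ → ℕ)
    (hg : ∀ i ∈ S, g i < k) (hchain : ∀ i ∈ S, ∀ j ∈ S, i < j → g i = g j → x i ≤ x j) :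
    S.card ≤ greeneC N x k := by
  rcases Nat.eq_zero_or_pos k with rfl | hk
  · simp [Finset.eq_empty_of_forall_notMem fun i hi => Nat.not_lt_zero _ (hg i hi)]
  refine le_csSup ⟨N, ?_⟩ ⟨S, hS, rfl, fun i => ⟨g i % k, Nat.mod_lt _ hk⟩, ?_⟩
  · rintro _ ⟨T, hT, rfl, -⟩
    exact Finset.card_le_of_forall_mem_Icc_one hT
  · intro i hi j hj hij hfij
    rw [Fin.mk.injEq, Nat.mod_eq_of_lt (hg i hi), Nat.mod_eq_of_lt (hg j hj)] at hfij
    exact hchain i hi j hj hij hfij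

lemma rsShape_eq_twoColumn {m : ℕ} (hm : 2 * m ≤ N)
    (h : ∀ k, greeneC N x k = min (k + min k m) N) : rsShape N x = twoColumn (N - m) m := by
  funext i
  simp only [rsShape, h, twoColumn]
  split_ifs <;> omega

end Greene

section SupMinus

variable {n : ℕ} {lam : ℕ → ℝ}

lemma supMinus_of_le {i : ℕ} (hi : i ≤ n) : supMinus n lam i = lam i := if_pos hi

lemma supMinus_of_lt {i : ℕ} (hi : n < i) : supMinus n lam i = -lam (2 * n + 1 - i) :=
  if_neg (by omega)

lemma supMinus_le_supMinus (hlam : StrictAntiOn lam (Set.Icc 1 n)) {i j : ℕ} (hi : 1 ≤ i)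
    (hij : i < j) (hj : j ≤ 2 * n) (hle : supMinus n lam i ≤ supMinus n lam j) :
    i ≤ n ∧ n < j ∧ lam i + lam (2 * n + 1 - j) ≤ 0 := by
  by_cases hin : i ≤ n
  · by_cases hjn : j ≤ n
    · rw [supMinus_of_le hin, supMinus_of_le hjn] at hle
      exact absurd hle (hlam ⟨hi, hin⟩ ⟨by omega, hjn⟩ hij).not_ge
    · rw [supMinus_of_le hin, supMinus_of_lt (by omega)] at hle
      exact ⟨hin, by omega, by linarith⟩
  · rw [supMinus_of_lt (by omega), supMinus_of_lt (by omega)] at hle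
    have := hlam (a := 2 * n + 1 - j) (b := 2 * n + 1 - i) ⟨by omega, by omega⟩
      ⟨by omega, by omega⟩ (by omega)
    linarith

lemma greeneC_supMinus_le (hlam : StrictAntiOn lam (Set.Icc 1 n)) (k : ℕ) :
    greeneC (2 * n) (supMinus n lam) k ≤ min (k + min k (pairingNumber n lam)) (2 * n) := by
  classical
  refine csSup_le' ?_
  rintro _ ⟨S, hS, rfl, f, hf⟩
  have hchain {i j : ℕ} (hi : i ∈ S) (hj : j ∈ S) (hij : i < j) (hfij : f i = f j) :=
    supMinus_le_supMinus hlam (hS i hi).1 hij (hS j hj).2 (hf i hi j hj hij hfij)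
  -- monochromatic increasing pairs cross the middle: each colour occurs at most once per half
  have hside (P : ℕ → Prop) [DecidablePred P] (hP : ∀ i j, P i → P j → ¬ (i ≤ n ∧ n < j)) :
      Set.InjOn f (S.filter P) := by
    intro i hi j hj hfij
    simp only [Finset.coe_filter, Set.mem_ofPred_eq] at hi hj
    by_contra hne
    rcases Nat.lt_or_gt_of_ne hne with h | h
    · obtain ⟨hi', hj', -⟩ := hchain hi.1 hj.1 h hfij
      exact hP i j hi.2 hj.2 ⟨hi', hj'⟩
    · obtain ⟨hj', hi', -⟩ := hchain hj.1 hi.1 h hfij.symm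
      exact hP j i hj.2 hi.2 ⟨hj', hi'⟩
  set L := S.filter (· ≤ n)
  set R := S.filter (¬ · ≤ n)
  have hL : Set.InjOn f L := hside _ fun i j _ hj h => by omega
  have hR : Set.InjOn f R := hside _ fun i j hi _ h => by omega
  have hT : ((L ×ˢ R).filter fun p => f p.1 = f p.2).card ≤ pairingNumber n lam :=
    card_filter_eq_le_pairingNumber hlam.antitoneOn
      (fun i hi => ⟨(hS i (Finset.mem_filter.mp hi).1).1, (Finset.mem_filter.mp hi).2⟩)
      (fun j hj => ⟨not_le.mp (Finset.mem_filter.mp hj).2, (hS j (Finset.mem_filter.mp hj).1).2⟩)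
      hL hR fun i hi j hj hfij =>
        (hchain (Finset.mem_filter.mp hi).1 (Finset.mem_filter.mp hj).1
          (by have := (Finset.mem_filter.mp hi).2; have := (Finset.mem_filter.mp hj).2; omega)
          hfij).2.2
  have hS2n : S.card ≤ 2 * n := Finset.card_le_of_forall_mem_Icc_one hS
  have hLk : L.card ≤ k := by
    simpa [Finset.card_image_of_injOn hL] using Finset.card_le_univ (L.image f)
  have hRk : R.card ≤ k := by
    simpa [Finset.card_image_of_injOn hR] using Finset.card_le_univ (R.image f)
  have hLR := Finset.card_add_card_le_card_add_card_filter_eq hL hR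
  have hSLR : L.card + R.card = S.card := S.card_filter_add_card_filter_not _
  simp only [Fintype.card_fin] at hLR
  omega

lemma le_greeneC_supMinus (hlam : AntitoneOn lam (Set.Icc 1 n)) (k : ℕ) :
    min (k + min k (pairingNumber n lam)) (2 * n) ≤ greeneC (2 * n) (supMinus n lam) k := by
  set M := pairingNumber n lam
  have hMn : M ≤ n := pairingNumber_le
  obtain ⟨P, hP⟩ : ∃ P, P = min k M := ⟨_, rfl⟩
  obtain ⟨s, hs⟩ : ∃ s, s = min (k - P) (2 * n - 2 * P) := ⟨_, rfl⟩
  obtain ⟨u, hu⟩ : ∃ u, u = min s (n - P) := ⟨_, rfl⟩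
  -- `P` pairs `(n - P + t, n + t)`, flanked by `u` singletons on the left and `s - u` on the right;
  -- colour `i ≤ n` by `n - i` and the right half so that exactly the pairs share a colour
  let g : ℕ → ℕ := fun i =>
    if i ≤ n then n - i else if i ≤ n + P then n + P - i else i - n + u - 1
  let S := Finset.Icc (n - P - u + 1) (n + P + (s - u))
  have hS (i : ℕ) (hi : i ∈ S) : n - P - u + 1 ≤ i ∧ i ≤ n + P + (s - u) := Finset.mem_Icc.mp hi
  have hpaired (i : ℕ) (hi : i ∈ S) (j : ℕ) (hj : j ∈ S) (hij : i < j) (hg : g i = g j) :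
      n - P < i ∧ i ≤ n ∧ j = i + P := by
    have := hS i hi
    have := hS j hj
    simp only [g] at hg
    split_ifs at hg <;> omega
  have hgood : TailPairsNonpos n lam P := tailPairsNonpos_pairingNumber.mono hlam hMn (by omega)
  have hcard := le_greeneC (x := supMinus n lam) (N := 2 * n) (k := k) (S := S)
    (fun i hi => by have := hS i hi; omega) g
    (fun i hi => by have := hS i hi; simp only [g]; split_ifs <;> omega)
    (fun i hi j hj hij hg => by
      obtain ⟨h₁, h₂, rfl⟩ := hpaired i hi j hj hij hg
      have := hS (i + P) hj
      rw [supMinus_of_le h₂, supMinus_of_lt (by omega)]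
      have := hgood (i - (n - P)) (by omega) (by omega)
      rw [show n - P + (i - (n - P)) = i by omega,
        show n + 1 - (i - (n - P)) = 2 * n + 1 - (i + P) by omega] at this
      linarith)
  simp only [S, Nat.card_Icc] at hcard
  omega

lemma greeneC_supMinus (hlam : StrictAntiOn lam (Set.Icc 1 n)) (k : ℕ) :
    greeneC (2 * n) (supMinus n lam) k = min (k + min k (pairingNumber n lam)) (2 * n) :=
  (greeneC_supMinus_le hlam k).antisymm (le_greeneC_supMinus hlam.antitoneOn k)

lemma pShape_eq_twoColumn (hlam : StrictAntiOn lam (Set.Icc 1 n)) :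
    pShape n lam = twoColumn (2 * n - pairingNumber n lam) (pairingNumber n lam) :=
  rsShape_eq_twoColumn (by linarith [pairingNumber_le (n := n) (lam := lam)])
    (greeneC_supMinus hlam)

end SupMinus

lemma sq_sub_eq_of_add_eq {a b n F : ℕ} (hab : a + b = n) (hF : F = a ^ 2 + b * (b - 1)) :
    (n : ℤ) ^ 2 - F = b * (2 * n + 1 - 2 * b) := by
  subst hab hF
  rcases b with _ | b
  · simp
  · push_cast
    ring

/-- for `λ_1 > … > λ_n`, with `q = ᵗp(λ⁻)`: the shape has at most two
columns, `q_1 + q_2 = 2n`, `q_1^odd + q_2^odd = n`,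
`F_b(λ⁻) = (q_1^odd)² + q_2^odd(q_2^odd − 1)`, and
`n² − F_b(λ⁻) = q_2^odd(2n + 1 − 2q_2^odd)`. -/
theorem gkdim_formula_sp_integral (n : ℕ) (lam : ℕ → ℝ)
    (hdec : ∀ i, 1 ≤ i → i < n → lam (i + 1) < lam i) :
    (∀ j, 3 ≤ j → qShape n lam j = 0) ∧
    qShape n lam 1 + qShape n lam 2 = 2 * n ∧
    colOdd (qShape n lam) 1 + colOdd (qShape n lam) 2 = n ∧
    Fb n lam = colOdd (qShape n lam) 1 ^ 2 +
      colOdd (qShape n lam) 2 * (colOdd (qShape n lam) 2 - 1) ∧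
    (n : ℤ) ^ 2 - (Fb n lam : ℤ) =
      (colOdd (qShape n lam) 2 : ℤ) *
        (2 * (n : ℤ) + 1 - 2 * (colOdd (qShape n lam) 2 : ℤ)) := by
  have hlam : StrictAntiOn lam (Set.Icc 1 n) :=
    strictAntiOn_of_succ_lt Set.ordConnected_Icc fun i _ hi hi' => by
      simp only [Order.succ_eq_add_one, Set.mem_Icc] at hi hi' ⊢
      exact hdec i hi.1 (by omega)
  have hM : pairingNumber n lam ≤ n := pairingNumber_le
  have hq : qShape n lam =
      dualPart (twoColumn (2 * n - pairingNumber n lam) (pairingNumber n lam)) := by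
    rw [qShape, pShape_eq_twoColumn hlam]
  have hFb : Fb n lam = colOdd (qShape n lam) 1 ^ 2 +
      colOdd (qShape n lam) 2 * (colOdd (qShape n lam) 2 - 1) := by
    rw [Fb, pShape_eq_twoColumn hlam, twoColumn.finsum_pred_mul_rowOdd (by omega), colOdd_one,
      colOdd_two, hq, twoColumn.dualPart_one (by omega), twoColumn.dualPart_two]
  have hodd : colOdd (qShape n lam) 1 + colOdd (qShape n lam) 2 = n := by
    rw [colOdd_one, colOdd_two, hq, twoColumn.dualPart_one (by omega), twoColumn.dualPart_two]
    omega
  refine ⟨fun j hj => hq ▸ twoColumn.dualPart_of_three_le hj, ?_, hodd, hFb,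
    sq_sub_eq_of_add_eq hodd hFb⟩
  rw [hq, twoColumn.dualPart_one (by omega), twoColumn.dualPart_two]
  omega
end

section
/- Let λ = (λ_1,…,λ_n) ∈ ℝⁿ with λ_1 > λ_2 > … > λ_n, and let q = ᵗp(λ⁻) be the dual of the Robinson–Schensted shape of λ⁻. Then q_j = 0 for j ≥ 3, q_1 + q_2 = 2n, q_1^ev + q_2^ev = n, and n² − F_d(λ⁻) = n + q_2^ev · (2n − 1 − 2·q_2^ev), where F_d(λ⁻) = Σ_{i≥1}(i−1)·p(λ⁻)_i^ev = q_1^ev(q_1^ev − 1) + (q_2^ev)². -/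
/-- The number of even boxes in row `i` of the Young diagram of `p`. -/
def rowEv (p : ℕ → ℕ) (i : ℕ) : ℕ :=
  ((Finset.Icc 1 (p i)).filter fun j => Even (i + j)).card

/-- The number of even boxes in column `j`, where `q` is the dual partition. -/
def colEv (q : ℕ → ℕ) (j : ℕ) : ℕ :=
  ((Finset.Icc 1 (q j)).filter fun i => Even (i + j)).card

/-- `F_d(λ⁻) = Σ_{i≥1} (i−1)·p(λ⁻)_i^ev`. -/
noncomputable def Fd (n : ℕ) (lam : ℕ → ℝ) : ℕ :=
  ∑ᶠ (i : ℕ) (_ : 1 ≤ i), (i - 1) * rowEv (pShape n lam) i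

namespace GKaux

def IsMatching (n : ℕ) (lam : ℕ → ℝ) (m : ℕ) : Prop :=
  ∃ a b : ℕ → ℕ,
    (∀ t, t < m → 1 ≤ a t ∧ a t ≤ n ∧ 1 ≤ b t ∧ b t ≤ n ∧ lam (a t) + lam (b t) ≤ 0) ∧
    Set.InjOn a (Set.Iio m) ∧ Set.InjOn b (Set.Iio m)

theorem isMatching_zero (n : ℕ) (lam : ℕ → ℝ) : IsMatching n lam 0 :=
  ⟨id, id, fun t ht => absurd ht (Nat.not_lt_zero t),
    fun u hu => absurd hu (by simp), fun u hu => absurd hu (by simp)⟩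

theorem isMatching_le (n : ℕ) (lam : ℕ → ℝ) (m : ℕ) (h : IsMatching n lam m) : m ≤ n := by
  obtain ⟨a, b, hab, ha, hb⟩ := h
  have h1 : (Finset.range m).image a ⊆ Finset.Icc 1 n := by
    intro i hi
    simp only [Finset.mem_image, Finset.mem_range] at hi
    obtain ⟨t, ht, rfl⟩ := hi
    have := hab t ht
    simp only [Finset.mem_Icc]
    omega
  have h2 : ((Finset.range m).image a).card = m := by
    rw [Finset.card_image_of_injOn, Finset.card_range]
    intro u hu v hv huv
    exact ha (by simpa using hu) (by simpa using hv) huv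
  have := Finset.card_le_card h1
  simp [h2] at this
  omega

noncomputable def mr (n : ℕ) (lam : ℕ → ℝ) : ℕ := sSup {m | IsMatching n lam m}

theorem mr_isMatching (n : ℕ) (lam : ℕ → ℝ) : IsMatching n lam (mr n lam) :=
  Nat.sSup_mem (s := {m | IsMatching n lam m}) ⟨0, isMatching_zero n lam⟩
    ⟨n, fun m hm => isMatching_le n lam m hm⟩

theorem mr_le (n : ℕ) (lam : ℕ → ℝ) : mr n lam ≤ n :=
  isMatching_le n lam _ (mr_isMatching n lam)

theorem le_mr (n : ℕ) (lam : ℕ → ℝ) (m : ℕ) (h : IsMatching n lam m) : m ≤ mr n lam :=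
  le_csSup ⟨n, fun m' hm' => isMatching_le n lam m' hm'⟩ h

section Seq

variable {n : ℕ} {lam : ℕ → ℝ} (hdec : ∀ i, 1 ≤ i → i < n → lam (i + 1) < lam i)

theorem lam_strict (hdec : ∀ i, 1 ≤ i → i < n → lam (i + 1) < lam i) :
    ∀ i j, 1 ≤ i → i < j → j ≤ n → lam j < lam i := by
  have key : ∀ d i, 1 ≤ i → i + d + 1 ≤ n → lam (i + d + 1) < lam i := by
    intro d
    induction d with
    | zero => intro i h1 h2; simpa using hdec i h1 (by omega)
    | succ d ih =>
      intro i h1 h2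
      have h3 := hdec (i + d + 1) (by omega) (by omega)
      have h4 := ih i h1 (by omega)
      have : i + (d + 1) + 1 = i + d + 1 + 1 := by omega
      rw [this]
      linarith
  intro i j h1 hij hj
  have := key (j - i - 1) i h1 (by omega)
  have hji : i + (j - i - 1) + 1 = j := by omega
  rwa [hji] at this

theorem x_first {i : ℕ} (h : i ≤ n) : supMinus n lam i = lam i := by
  simp [supMinus, h]

theorem x_second {i : ℕ} (h : n < i) : supMinus n lam i = -lam (2 * n + 1 - i) := by
  simp [supMinus, Nat.not_le.mpr h]

include hdec in
theorem x_lt_first {i j : ℕ} (h1 : 1 ≤ i) (hij : i < j) (hj : j ≤ n) :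
    supMinus n lam j < supMinus n lam i := by
  rw [x_first hj, x_first (le_trans (le_of_lt hij) hj)]
  exact lam_strict hdec i j h1 hij hj

include hdec in
theorem x_lt_second {i j : ℕ} (hi : n < i) (hij : i < j) (hj : j ≤ 2 * n) :
    supMinus n lam j < supMinus n lam i := by
  rw [x_second hi, x_second (lt_trans hi hij)]
  have := lam_strict hdec (2 * n + 1 - j) (2 * n + 1 - i) (by omega) (by omega) (by omega)
  linarith

include hdec in
/-- Upper bound on Greene invariants. -/
theorem greene_mem_bound (k m : ℕ)
    (hm : ∃ S : Finset ℕ, (∀ i ∈ S, 1 ≤ i ∧ i ≤ 2 * n) ∧ m = S.card ∧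
      ∃ f : ℕ → Fin k, ∀ i ∈ S, ∀ j ∈ S, i < j → f i = f j →
        supMinus n lam i ≤ supMinus n lam j) :
    m ≤ min (2 * n) (min (2 * k) (k + mr n lam)) := by
  classical
  obtain ⟨S, hSb, rfl, f, hf⟩ := hm
  have key : ∀ i ∈ S, ∀ j ∈ S, i < j → f i = f j → i ≤ n ∧ n < j := by
    intro i hi j hj hij hfij
    have hx := hf i hi j hj hij hfij
    constructor
    · by_contra h
      push_neg at h
      exact absurd hx (not_le.mpr (x_lt_second hdec h hij (hSb j hj).2))
    · by_contra h
      push_neg at h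
      exact absurd hx (not_le.mpr (x_lt_first hdec (hSb i hi).1 hij h))
  set fib : Fin k → Finset ℕ := fun c => S.filter (fun i => f i = c) with hfibdef
  have hfibA : ∀ c, ((fib c).filter (fun i => i ≤ n)).card ≤ 1 := by
    intro c
    rw [Finset.card_le_one]
    intro u hu v hv
    simp only [hfibdef, Finset.mem_filter] at hu hv
    by_contra hne
    rcases Ne.lt_or_gt hne with h | h
    · exact absurd (key u hu.1.1 v hv.1.1 h (hu.1.2.trans hv.1.2.symm)).2 (not_lt.mpr hv.2)
    · exact absurd (key v hv.1.1 u hu.1.1 h (hv.1.2.trans hu.1.2.symm)).2 (not_lt.mpr hu.2)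
  have hfibB : ∀ c, ((fib c).filter (fun i => ¬ i ≤ n)).card ≤ 1 := by
    intro c
    rw [Finset.card_le_one]
    intro u hu v hv
    simp only [hfibdef, Finset.mem_filter] at hu hv
    by_contra hne
    rcases Ne.lt_or_gt hne with h | h
    · exact absurd (key u hu.1.1 v hv.1.1 h (hu.1.2.trans hv.1.2.symm)).1 hu.2
    · exact absurd (key v hv.1.1 u hu.1.1 h (hv.1.2.trans hu.1.2.symm)).1 hv.2
  have hfibsplit : ∀ c, ((fib c).filter (fun i => i ≤ n)).card
      + ((fib c).filter (fun i => ¬ i ≤ n)).card = (fib c).card := by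
    intro c
    exact Finset.card_filter_add_card_filter_not (fun i => i ≤ n)
  have hfib2 : ∀ c, (fib c).card ≤ 2 := by
    intro c
    have := hfibA c
    have := hfibB c
    have := hfibsplit c
    omega
  have hcard : S.card = ∑ c : Fin k, (fib c).card :=
    Finset.card_eq_sum_card_fiberwise (fun i _ => Finset.mem_univ (f i))
  have bound1 : S.card ≤ 2 * n := by
    have hsub : S ⊆ Finset.Icc 1 (2 * n) := fun i hi => Finset.mem_Icc.mpr (hSb i hi)
    have := Finset.card_le_card hsub
    simpa using this
  have bound2 : S.card ≤ 2 * k := by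
    rw [hcard]
    calc ∑ c : Fin k, (fib c).card ≤ ∑ _c : Fin k, 2 := Finset.sum_le_sum fun c _ => hfib2 c
      _ = 2 * k := by simp [mul_comm]
  set T : Finset (Fin k) := Finset.univ.filter (fun c => (fib c).card = 2) with hTdef
  have bound3 : S.card ≤ k + T.card := by
    rw [hcard]
    calc ∑ c : Fin k, (fib c).card
        ≤ ∑ c : Fin k, (1 + if c ∈ T then 1 else 0) := by
          apply Finset.sum_le_sum
          intro c _
          have h2 := hfib2 c
          by_cases hc : c ∈ T
          · simp only [if_pos hc]; omega
          · simp only [if_neg hc]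
            simp only [hTdef, Finset.mem_filter, Finset.mem_univ, true_and] at hc
            omega
      _ = k + T.card := by
          rw [Finset.sum_add_distrib]
          simp [Finset.sum_ite_mem]
  have hT1 : ∀ c ∈ T, ((fib c).filter (fun i => i ≤ n)).card = 1 ∧
      ((fib c).filter (fun i => ¬ i ≤ n)).card = 1 := by
    intro c hc
    have h2 : (fib c).card = 2 := (Finset.mem_filter.mp hc).2
    have := hfibA c
    have := hfibB c
    have := hfibsplit c
    omega
  have hmatch : IsMatching n lam T.card := by
    set e := T.equivFin.symm with hedef
    set uu : Fin k → ℕ := fun c =>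
      if h : ((fib c).filter (fun i => i ≤ n)).Nonempty
        then ((fib c).filter (fun i => i ≤ n)).min' h else 0 with huudef
    set vv : Fin k → ℕ := fun c =>
      if h : ((fib c).filter (fun i => ¬ i ≤ n)).Nonempty
        then ((fib c).filter (fun i => ¬ i ≤ n)).min' h else 0 with hvvdef
    have huu : ∀ c ∈ T, uu c ∈ S ∧ f (uu c) = c ∧ uu c ≤ n := by
      intro c hc
      have hne : ((fib c).filter (fun i => i ≤ n)).Nonempty := by
        rw [← Finset.card_pos, (hT1 c hc).1]; norm_num
      have hmem := Finset.min'_mem _ hne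
      rw [Finset.mem_filter] at hmem
      obtain ⟨hm1, hm2⟩ := hmem
      simp only [hfibdef, Finset.mem_filter] at hm1
      simp only [huudef, dif_pos hne]
      exact ⟨hm1.1, hm1.2, hm2⟩
    have hvv : ∀ c ∈ T, vv c ∈ S ∧ f (vv c) = c ∧ n < vv c := by
      intro c hc
      have hne : ((fib c).filter (fun i => ¬ i ≤ n)).Nonempty := by
        rw [← Finset.card_pos, (hT1 c hc).2]; norm_num
      have hmem := Finset.min'_mem _ hne
      rw [Finset.mem_filter] at hmem
      obtain ⟨hm1, hm2⟩ := hmem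
      simp only [hfibdef, Finset.mem_filter] at hm1
      simp only [hvvdef, dif_pos hne]
      exact ⟨hm1.1, hm1.2, by omega⟩
    refine ⟨fun t => if h : t < T.card then uu (e ⟨t, h⟩) else 0,
      fun t => if h : t < T.card then 2 * n + 1 - vv (e ⟨t, h⟩) else 0, ?_, ?_, ?_⟩
    · intro t ht
      simp only [dif_pos ht]
      set c : Fin k := (e ⟨t, ht⟩ : Fin k) with hcdef
      have hcT : c ∈ T := (e ⟨t, ht⟩).2
      obtain ⟨hu1, hu2, hu3⟩ := huu c hcT
      obtain ⟨hv1, hv2, hv3⟩ := hvv c hcT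
      have hub := hSb _ hu1
      have hvb := hSb _ hv1
      have hxle := hf _ hu1 _ hv1 (by omega) (hu2.trans hv2.symm)
      rw [x_first hu3, x_second hv3] at hxle
      refine ⟨by omega, by omega, by omega, by omega, by linarith⟩
    · intro t ht t' ht' htt
      simp only [Set.mem_Iio] at ht ht'
      simp only [dif_pos ht, dif_pos ht'] at htt
      have h1 := (huu _ (e ⟨t, ht⟩).2).2.1
      have h2 := (huu _ (e ⟨t', ht'⟩).2).2.1
      rw [htt, h2] at h1
      exact (congrArg Fin.val (e.injective (Subtype.coe_injective h1))).symm
    · intro t ht t' ht' htt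
      simp only [Set.mem_Iio] at ht ht'
      simp only [dif_pos ht, dif_pos ht'] at htt
      obtain ⟨hv1, hv2, hv3⟩ := hvv _ (e ⟨t, ht⟩).2
      obtain ⟨hv1', hv2', hv3'⟩ := hvv _ (e ⟨t', ht'⟩).2
      have hb1 := (hSb _ hv1).2
      have hb2 := (hSb _ hv1').2
      have hveq : vv (e ⟨t, ht⟩) = vv (e ⟨t', ht'⟩) := by omega
      rw [hveq, hv2'] at hv2
      exact (congrArg Fin.val (e.injective (Subtype.coe_injective hv2))).symm
  have bound3' : T.card ≤ mr n lam := le_mr n lam _ hmatch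
  omega

include hdec in
/-- Lower bound: the bound is attained. -/
theorem greene_ge (k : ℕ) :
    min (2 * n) (min (2 * k) (k + mr n lam)) ≤ greeneC (2 * n) (supMinus n lam) k := by
  classical
  rcases Nat.eq_zero_or_pos k with rfl | kpos
  · simp
  have hbdd : BddAbove {m : ℕ | ∃ S : Finset ℕ, (∀ i ∈ S, 1 ≤ i ∧ i ≤ 2 * n) ∧ m = S.card ∧
      ∃ f : ℕ → Fin k, ∀ i ∈ S, ∀ j ∈ S, i < j → f i = f j →
        supMinus n lam i ≤ supMinus n lam j} := by
    refine ⟨2 * n, fun m hm => ?_⟩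
    exact le_trans (greene_mem_bound hdec k m hm) (min_le_left _ _)
  apply le_csSup hbdd
  obtain ⟨a, b, hab, ha, hb⟩ := mr_isMatching n lam
  set r := mr n lam with hrdef
  have hrn : r ≤ n := mr_le n lam
  set s := min k r with hsdef
  set m := min (2 * n) (min (2 * k) (k + r)) with hmdef
  have hsr : s ≤ r := min_le_right _ _
  have hsk : s ≤ k := min_le_left _ _
  have habs : ∀ t, t < s → 1 ≤ a t ∧ a t ≤ n ∧ 1 ≤ b t ∧ b t ≤ n ∧ lam (a t) + lam (b t) ≤ 0 :=
    fun t ht => hab t (lt_of_lt_of_le ht hsr)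
  set P1 := (Finset.range s).image a with hP1def
  set P2 := (Finset.range s).image (fun t => 2 * n + 1 - b t) with hP2def
  have hP1card : P1.card = s := by
    rw [hP1def, Finset.card_image_of_injOn, Finset.card_range]
    intro u hu v hv huv
    exact ha (by simp only [Finset.coe_range, Set.mem_Iio] at hu; exact lt_of_lt_of_le hu hsr)
      (by simp only [Finset.coe_range, Set.mem_Iio] at hv; exact lt_of_lt_of_le hv hsr) huv
  have hP2card : P2.card = s := by
    rw [hP2def, Finset.card_image_of_injOn, Finset.card_range]
    intro u hu v hv huv
    simp only [Finset.coe_range, Set.mem_Iio] at hu hv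
    simp only at huv
    have h1 := (habs u hu).2.2.2.1
    have h2 := (habs v hv).2.2.2.1
    have : b u = b v := by omega
    exact hb (lt_of_lt_of_le hu hsr) (lt_of_lt_of_le hv hsr) this
  have hP1sub : ∀ i ∈ P1, 1 ≤ i ∧ i ≤ n := by
    intro i hi
    simp only [hP1def, Finset.mem_image, Finset.mem_range] at hi
    obtain ⟨t, ht, rfl⟩ := hi
    have := habs t ht
    omega
  have hP2sub : ∀ i ∈ P2, n + 1 ≤ i ∧ i ≤ 2 * n := by
    intro i hi
    simp only [hP2def, Finset.mem_image, Finset.mem_range] at hi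
    obtain ⟨t, ht, rfl⟩ := hi
    have := habs t ht
    omega
  have hdisj : Disjoint P1 P2 := by
    rw [Finset.disjoint_left]
    intro i h1 h2
    have := hP1sub i h1
    have := hP2sub i h2
    omega
  set S0 := P1 ∪ P2 with hS0def
  have hS0card : S0.card = 2 * s := by
    rw [hS0def, Finset.card_union_of_disjoint hdisj, hP1card, hP2card]
    omega
  have hS0sub : S0 ⊆ Finset.Icc 1 (2 * n) := by
    intro i hi
    rcases Finset.mem_union.mp hi with h | h
    · have := hP1sub i h; simp only [Finset.mem_Icc]; omega
    · have := hP2sub i h; simp only [Finset.mem_Icc]; omega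
  have harith : 2 * s ≤ m ∧ m ≤ 2 * n ∧ s + (m - 2 * s) ≤ k := by omega
  obtain ⟨E, hEsub, hEcard⟩ := Finset.exists_subset_card_eq
    (s := Finset.Icc 1 (2 * n) \ S0) (n := m - 2 * s)
    (by rw [Finset.card_sdiff_of_subset hS0sub, hS0card, Nat.card_Icc]; omega)
  have hES0 : Disjoint S0 E :=
    Finset.disjoint_of_subset_right hEsub Finset.sdiff_disjoint.symm
  have hEP : ∀ i ∈ E, i ∉ S0 := by
    intro i hi
    have := hEsub hi
    exact (Finset.mem_sdiff.mp this).2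
  refine ⟨S0 ∪ E, ?_, ?_, ?_⟩
  · intro i hi
    rcases Finset.mem_union.mp hi with h | h
    · exact Finset.mem_Icc.mp (hS0sub h)
    · have := hEsub h
      exact Finset.mem_Icc.mp (Finset.mem_sdiff.mp this).1
  · rw [Finset.card_union_of_disjoint hES0, hS0card, hEcard]
    omega
  · have hEidx : ∀ i ∈ E, s + (E.filter (fun j => j < i)).card < k := by
      intro i hi
      have h1 : (E.filter (fun j => j < i)).card < E.card := by
        apply Finset.card_lt_card
        constructor
        · exact Finset.filter_subset _ _
        · intro hsub
          have := hsub hi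
          simp at this
      omega
    refine ⟨fun i =>
      if h1 : ∃ t, t < s ∧ a t = i then ⟨Nat.find h1, lt_of_lt_of_le (Nat.find_spec h1).1 hsk⟩
      else if h2 : ∃ t, t < s ∧ 2 * n + 1 - b t = i then
        ⟨Nat.find h2, lt_of_lt_of_le (Nat.find_spec h2).1 hsk⟩
      else if h3 : i ∈ E then ⟨s + (E.filter (fun j => j < i)).card, hEidx i h3⟩
      else ⟨0, kpos⟩, ?_⟩
    intro i hi j hj hij hfij
    simp only at hfij
    have hmemS : ∀ l, l ∈ S0 ∪ E →
        (∃ t, t < s ∧ a t = l) ∨ (∃ t, t < s ∧ 2 * n + 1 - b t = l) ∨ l ∈ E := by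
      intro l hl
      rcases Finset.mem_union.mp hl with h | h
      · rcases Finset.mem_union.mp h with h' | h'
        · left
          simp only [hP1def, Finset.mem_image, Finset.mem_range] at h'
          obtain ⟨t, ht, rfl⟩ := h'
          exact ⟨t, ht, rfl⟩
        · right; left
          simp only [hP2def, Finset.mem_image, Finset.mem_range] at h'
          obtain ⟨t, ht, rfl⟩ := h'
          exact ⟨t, ht, rfl⟩
      · right; right; exact h
    have hC1n : ∀ l, (∃ t, t < s ∧ a t = l) → l ≤ n := by
      rintro l ⟨t, ht, rfl⟩
      have := habs t ht
      omega
    have hC2n : ∀ l, (∃ t, t < s ∧ 2 * n + 1 - b t = l) → n < l := by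
      rintro l ⟨t, ht, rfl⟩
      have := habs t ht
      omega
    have h21 : ∀ l, (∃ t, t < s ∧ 2 * n + 1 - b t = l) → ¬ (∃ t, t < s ∧ a t = l) := by
      intro l h2 h1
      have := hC1n l h1
      have := hC2n l h2
      omega
    have hE1 : ∀ l, l ∈ E → ¬ (∃ t, t < s ∧ a t = l) := by
      rintro l hE ⟨t, ht, rfl⟩
      exact hEP _ hE (Finset.mem_union_left _
        (Finset.mem_image.mpr ⟨t, Finset.mem_range.mpr ht, rfl⟩))
    have hE2 : ∀ l, l ∈ E → ¬ (∃ t, t < s ∧ 2 * n + 1 - b t = l) := by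
      rintro l hE ⟨t, ht, rfl⟩
      exact hEP _ hE (Finset.mem_union_right _
        (Finset.mem_image.mpr ⟨t, Finset.mem_range.mpr ht, rfl⟩))
    rcases hmemS i hi with hc1i | hc2i | hc3i <;>
      rcases hmemS j hj with hc1j | hc2j | hc3j
    · rw [dif_pos hc1i, dif_pos hc1j] at hfij
      have hval : Nat.find hc1i = Nat.find hc1j := congrArg Fin.val hfij
      have hvi := Nat.find_spec hc1i
      have hvj := Nat.find_spec hc1j
      rw [hval] at hvi
      exfalso
      omega
    · rw [dif_pos hc1i, dif_neg (h21 j hc2j), dif_pos hc2j] at hfij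
      have hval : Nat.find hc1i = Nat.find hc2j := congrArg Fin.val hfij
      have hvi := Nat.find_spec hc1i
      have hvj := Nat.find_spec hc2j
      rw [hval] at hvi
      set t := Nat.find hc2j with htdef
      obtain ⟨hts, hat⟩ := hvi
      obtain ⟨-, hbt⟩ := hvj
      have hpt := habs t hts
      rw [← hat, ← hbt]
      rw [x_first (by omega), x_second (by omega)]
      have hsub2 : 2 * n + 1 - (2 * n + 1 - b t) = b t := by omega
      rw [hsub2]
      linarith [hpt.2.2.2.2]
    · rw [dif_pos hc1i, dif_neg (hE1 j hc3j), dif_neg (hE2 j hc3j), dif_pos hc3j] at hfij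
      have hval := congrArg Fin.val hfij
      simp only at hval
      have := (Nat.find_spec hc1i).1
      exfalso
      omega
    · exfalso
      have := hC2n i hc2i
      have := hC1n j hc1j
      omega
    · rw [dif_neg (h21 i hc2i), dif_pos hc2i, dif_neg (h21 j hc2j), dif_pos hc2j] at hfij
      have hval : Nat.find hc2i = Nat.find hc2j := congrArg Fin.val hfij
      have hvi := Nat.find_spec hc2i
      have hvj := Nat.find_spec hc2j
      rw [hval] at hvi
      exfalso
      omega
    · rw [dif_neg (h21 i hc2i), dif_pos hc2i, dif_neg (hE1 j hc3j), dif_neg (hE2 j hc3j),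
        dif_pos hc3j] at hfij
      have hval := congrArg Fin.val hfij
      simp only at hval
      have := (Nat.find_spec hc2i).1
      exfalso
      omega
    · rw [dif_neg (hE1 i hc3i), dif_neg (hE2 i hc3i), dif_pos hc3i, dif_pos hc1j] at hfij
      have hval := congrArg Fin.val hfij
      simp only at hval
      have := (Nat.find_spec hc1j).1
      exfalso
      omega
    · rw [dif_neg (hE1 i hc3i), dif_neg (hE2 i hc3i), dif_pos hc3i, dif_neg (h21 j hc2j),
        dif_pos hc2j] at hfij
      have hval := congrArg Fin.val hfij
      simp only at hval
      have := (Nat.find_spec hc2j).1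
      exfalso
      omega
    · rw [dif_neg (hE1 i hc3i), dif_neg (hE2 i hc3i), dif_pos hc3i, dif_neg (hE1 j hc3j),
        dif_neg (hE2 j hc3j), dif_pos hc3j] at hfij
      have hval := congrArg Fin.val hfij
      simp only at hval
      have hlt : (E.filter (fun l => l < i)).card < (E.filter (fun l => l < j)).card := by
        apply Finset.card_lt_card
        constructor
        · intro l hl
          rw [Finset.mem_filter] at hl ⊢
          exact ⟨hl.1, by omega⟩
        · intro hsub
          have hmem : i ∈ E.filter (fun l => l < i) :=
            hsub (by rw [Finset.mem_filter]; exact ⟨hc3i, hij⟩)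
          simp at hmem
      exfalso
      omega

end Seq

section Shape

variable {n : ℕ} {lam : ℕ → ℝ} (hdec : ∀ i, 1 ≤ i → i < n → lam (i + 1) < lam i)

include hdec in
theorem c_eq (k : ℕ) :
    greeneC (2 * n) (supMinus n lam) k = min (2 * n) (min (2 * k) (k + mr n lam)) := by
  refine le_antisymm ?_ (greene_ge hdec k)
  apply csSup_le'
  intro m hm
  exact greene_mem_bound hdec k m hm

include hdec in
theorem pShape_eq (i : ℕ) (hi : 1 ≤ i) :
    pShape n lam i = if i ≤ mr n lam then 2 else if i ≤ 2 * n - mr n lam then 1 else 0 := by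
  have h1 := c_eq hdec i
  have h2 := c_eq hdec (i - 1)
  have hrn := mr_le n lam
  unfold pShape rsShape
  rw [h1, h2]
  split_ifs <;> omega

include hdec in
theorem q_ge3 (j : ℕ) (hj : 3 ≤ j) : qShape n lam j = 0 := by
  unfold qShape dualPart
  have hset : {i : ℕ | 1 ≤ i ∧ j ≤ pShape n lam i} = ∅ := by
    rw [Set.eq_empty_iff_forall_notMem]
    rintro i ⟨hi1, hi2⟩
    rw [pShape_eq hdec i hi1] at hi2
    split_ifs at hi2 <;> omega
  rw [hset, Set.ncard_empty]

include hdec in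
theorem q1_eq : qShape n lam 1 = 2 * n - mr n lam := by
  unfold qShape dualPart
  have hrn := mr_le n lam
  have hset : {i : ℕ | 1 ≤ i ∧ 1 ≤ pShape n lam i} = ↑(Finset.Icc 1 (2 * n - mr n lam)) := by
    ext i
    simp only [Set.mem_setOf_eq, Finset.coe_Icc, Set.mem_Icc]
    constructor
    · rintro ⟨hi1, hi2⟩
      rw [pShape_eq hdec i hi1] at hi2
      refine ⟨hi1, ?_⟩
      split_ifs at hi2 <;> omega
    · rintro ⟨hi1, hi2⟩
      rw [pShape_eq hdec i hi1]
      split_ifs <;> omega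
  rw [hset, Set.ncard_coe_finset, Nat.card_Icc]
  omega

include hdec in
theorem q2_eq : qShape n lam 2 = mr n lam := by
  unfold qShape dualPart
  have hrn := mr_le n lam
  have hset : {i : ℕ | 1 ≤ i ∧ 2 ≤ pShape n lam i} = ↑(Finset.Icc 1 (mr n lam)) := by
    ext i
    simp only [Set.mem_setOf_eq, Finset.coe_Icc, Set.mem_Icc]
    constructor
    · rintro ⟨hi1, hi2⟩
      rw [pShape_eq hdec i hi1] at hi2
      refine ⟨hi1, ?_⟩
      split_ifs at hi2 <;> omega
    · rintro ⟨hi1, hi2⟩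
      rw [pShape_eq hdec i hi1]
      split_ifs <;> omega
  rw [hset, Set.ncard_coe_finset, Nat.card_Icc]
  omega

end Shape

theorem card_filter_parity (M v : ℕ) :
    ((Finset.Icc 1 M).filter (fun i => Even (i + v))).card
      = ∑ i ∈ Finset.Icc 1 M, (if Even (i + v) then 1 else 0) := by
  rw [Finset.card_filter]

theorem sum_parity_one (M v : ℕ) :
    (∑ i ∈ Finset.Icc 1 M, (if Even (i + v) then (1 : ℕ) else 0)) = (M + v) / 2 - v / 2 := by
  induction M with
  | zero => simp
  | succ M ih =>
    rw [Finset.sum_Icc_succ_top (by omega), ih]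
    simp only [Nat.even_iff]
    split_ifs with h <;> omega

theorem card_filter_odd (M : ℕ) :
    ((Finset.Icc 1 M).filter (fun i => Even (i + 1))).card = (M + 1) / 2 := by
  rw [card_filter_parity, sum_parity_one]
  omega

theorem card_filter_even (M : ℕ) :
    ((Finset.Icc 1 M).filter (fun i => Even (i + 2))).card = M / 2 := by
  rw [card_filter_parity, sum_parity_one]
  omega

theorem sum_odd_val (M : ℕ) :
    (∑ i ∈ Finset.Icc 1 M, (if Even (i + 1) then i - 1 else 0))
      = ((M + 1) / 2) * ((M + 1) / 2 - 1) := by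
  induction M with
  | zero => simp
  | succ M ih =>
    rw [Finset.sum_Icc_succ_top (by omega), ih]
    simp only [Nat.even_iff]
    split_ifs with h
    · -- M + 1 + 1 even, so M even; term added is M
      obtain ⟨c, rfl⟩ : ∃ c, M = 2 * c := ⟨M / 2, by omega⟩
      have e1 : (2 * c + 1) / 2 = c := by omega
      have e2 : (2 * c + 1 + 1) / 2 = c + 1 := by omega
      have e3 : 2 * c + 1 - 1 = 2 * c := by omega
      rw [e1, e2, e3]
      cases c with
      | zero => simp
      | succ d =>
        have e4 : d + 1 + 1 - 1 = d + 1 := by omega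
        have e5 : d + 1 - 1 = d := by omega
        rw [e4, e5]
        ring
    · -- M odd; no term added and the quotient is unchanged
      obtain ⟨c, rfl⟩ : ∃ c, M = 2 * c + 1 := ⟨M / 2, by omega⟩
      have e1 : (2 * c + 1 + 1) / 2 = c + 1 := by omega
      have e2 : (2 * c + 1 + 1 + 1) / 2 = c + 1 := by omega
      rw [e1, e2]
      simp

theorem sum_even_val (M : ℕ) :
    (∑ i ∈ Finset.Icc 1 M, (if Even (i + 2) then i - 1 else 0))
      = (M / 2) * (M / 2) := by
  induction M with
  | zero => simp
  | succ M ih =>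
    rw [Finset.sum_Icc_succ_top (by omega), ih]
    simp only [Nat.even_iff]
    split_ifs with h
    · -- M + 1 even, so M odd; term added is M
      obtain ⟨c, rfl⟩ : ∃ c, M = 2 * c + 1 := ⟨M / 2, by omega⟩
      have e1 : (2 * c + 1) / 2 = c := by omega
      have e2 : (2 * c + 1 + 1) / 2 = c + 1 := by omega
      have e3 : 2 * c + 1 + 1 - 1 = 2 * c + 1 := by omega
      rw [e1, e2, e3]
      ring
    · obtain ⟨c, rfl⟩ : ∃ c, M = 2 * c := ⟨M / 2, by omega⟩
      have e1 : (2 * c) / 2 = c := by omega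
      have e2 : (2 * c + 1) / 2 = c := by omega
      rw [e1, e2]
      simp

section FdSec

variable {n : ℕ} {lam : ℕ → ℝ} (hdec : ∀ i, 1 ≤ i → i < n → lam (i + 1) < lam i)

include hdec in
theorem rowEv_eq (i : ℕ) (hi : 1 ≤ i) :
    rowEv (pShape n lam) i =
      (if Even (i + 1) ∧ i ≤ 2 * n - mr n lam then 1 else 0)
        + (if Even (i + 2) ∧ i ≤ mr n lam then 1 else 0) := by
  have hrn := mr_le n lam
  unfold rowEv
  rw [pShape_eq hdec i hi]
  by_cases h1 : i ≤ mr n lam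
  · rw [if_pos h1]
    have hIcc : Finset.Icc 1 2 = {1, 2} := by decide
    rw [hIcc, Finset.card_filter, Finset.sum_insert (by decide), Finset.sum_singleton]
    simp only [Nat.even_iff]
    split_ifs <;> omega
  · rw [if_neg h1]
    by_cases h2 : i ≤ 2 * n - mr n lam
    · rw [if_pos h2]
      have hIcc : Finset.Icc 1 1 = {1} := by decide
      rw [hIcc, Finset.card_filter, Finset.sum_singleton]
      simp only [Nat.even_iff]
      split_ifs <;> omega
    · rw [if_neg h2]
      have hIcc : Finset.Icc 1 0 = ∅ := by decide
      rw [hIcc, Finset.filter_empty, Finset.card_empty]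
      simp only [Nat.even_iff]
      split_ifs <;> omega

include hdec in
theorem Fd_eq : Fd n lam
    = ((2 * n - mr n lam + 1) / 2) * ((2 * n - mr n lam + 1) / 2 - 1)
      + ((mr n lam) / 2) * ((mr n lam) / 2) := by
  have hrn := mr_le n lam
  have hsupp : Fd n lam = ∑ i ∈ Finset.Icc 1 (2 * n), (i - 1) * rowEv (pShape n lam) i := by
    show (∑ᶠ (i : ℕ) (_ : i ∈ {j : ℕ | 1 ≤ j}), (i - 1) * rowEv (pShape n lam) i) = _
    rw [finsum_mem_eq_sum_of_inter_support_eq _ (t := Finset.Icc 1 (2 * n))]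
    ext i
    simp only [Set.mem_inter_iff, Set.mem_setOf_eq, Function.mem_support, Finset.coe_Icc,
      Set.mem_Icc]
    constructor
    · rintro ⟨hi1, hi2⟩
      refine ⟨⟨hi1, ?_⟩, hi2⟩
      by_contra hgt
      push_neg at hgt
      rw [rowEv_eq hdec i hi1] at hi2
      have : ¬ (Even (i + 1) ∧ i ≤ 2 * n - mr n lam) := by omega
      have : ¬ (Even (i + 2) ∧ i ≤ mr n lam) := by omega
      simp_all
    · rintro ⟨⟨hi1, _⟩, hi2⟩
      exact ⟨hi1, hi2⟩
  rw [hsupp]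
  have hterm : ∀ i ∈ Finset.Icc 1 (2 * n), (i - 1) * rowEv (pShape n lam) i
      = (if Even (i + 1) ∧ i ≤ 2 * n - mr n lam then i - 1 else 0)
        + (if Even (i + 2) ∧ i ≤ mr n lam then i - 1 else 0) := by
    intro i hi
    rw [rowEv_eq hdec i (Finset.mem_Icc.mp hi).1]
    simp only [Nat.even_iff]
    split_ifs <;> omega
  rw [Finset.sum_congr rfl hterm, Finset.sum_add_distrib]
  have hs1 : (∑ i ∈ Finset.Icc 1 (2 * n),
        (if Even (i + 1) ∧ i ≤ 2 * n - mr n lam then i - 1 else 0))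
      = ∑ i ∈ Finset.Icc 1 (2 * n - mr n lam), (if Even (i + 1) then i - 1 else 0) := by
    have hsub : Finset.Icc 1 (2 * n - mr n lam) ⊆ Finset.Icc 1 (2 * n) :=
      Finset.Icc_subset_Icc_right (by omega)
    rw [← Finset.sum_subset hsub]
    · apply Finset.sum_congr rfl
      intro i hi
      rw [Finset.mem_Icc] at hi
      by_cases he : Even (i + 1)
      · rw [if_pos ⟨he, hi.2⟩, if_pos he]
      · rw [if_neg (fun hc => he hc.1), if_neg he]
    · intro i hit his
      rw [Finset.mem_Icc] at hit
      rw [Finset.mem_Icc] at his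
      rw [if_neg]
      rintro ⟨-, hle⟩
      omega
  have hs2 : (∑ i ∈ Finset.Icc 1 (2 * n),
        (if Even (i + 2) ∧ i ≤ mr n lam then i - 1 else 0))
      = ∑ i ∈ Finset.Icc 1 (mr n lam), (if Even (i + 2) then i - 1 else 0) := by
    have hsub : Finset.Icc 1 (mr n lam) ⊆ Finset.Icc 1 (2 * n) :=
      Finset.Icc_subset_Icc_right (by omega)
    rw [← Finset.sum_subset hsub]
    · apply Finset.sum_congr rfl
      intro i hi
      rw [Finset.mem_Icc] at hi
      by_cases he : Even (i + 2)
      · rw [if_pos ⟨he, hi.2⟩, if_pos he]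
      · rw [if_neg (fun hc => he hc.1), if_neg he]
    · intro i hit his
      rw [Finset.mem_Icc] at hit
      rw [Finset.mem_Icc] at his
      rw [if_neg]
      rintro ⟨-, hle⟩
      omega
  rw [hs1, hs2, sum_odd_val, sum_even_val]

include hdec in
theorem colEv1_eq : colEv (qShape n lam) 1 = (2 * n - mr n lam + 1) / 2 := by
  unfold colEv
  rw [q1_eq hdec]
  exact card_filter_odd _

include hdec in
theorem colEv2_eq : colEv (qShape n lam) 2 = (mr n lam) / 2 := by
  unfold colEv
  rw [q2_eq hdec]
  exact card_filter_even _

end FdSec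
end GKaux


/-- for `λ_1 > … > λ_n`, with `q = ᵗp(λ⁻)`: the shape has at most two
columns, `q_1 + q_2 = 2n`, `q_1^ev + q_2^ev = n`,
`F_d(λ⁻) = q_1^ev(q_1^ev − 1) + (q_2^ev)²`, and
`n² − F_d(λ⁻) = n + q_2^ev(2n − 1 − 2q_2^ev)`. -/
theorem gkdim_formula_sp_half_integral (n : ℕ) (lam : ℕ → ℝ)
    (hdec : ∀ i, 1 ≤ i → i < n → lam (i + 1) < lam i) :
    (∀ j, 3 ≤ j → qShape n lam j = 0) ∧
    qShape n lam 1 + qShape n lam 2 = 2 * n ∧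
    colEv (qShape n lam) 1 + colEv (qShape n lam) 2 = n ∧
    Fd n lam = colEv (qShape n lam) 1 * (colEv (qShape n lam) 1 - 1) +
      colEv (qShape n lam) 2 ^ 2 ∧
    (n : ℤ) ^ 2 - (Fd n lam : ℤ) =
      (n : ℤ) + (colEv (qShape n lam) 2 : ℤ) *
        (2 * (n : ℤ) - 1 - 2 * (colEv (qShape n lam) 2 : ℤ)) := by
  have hrn := GKaux.mr_le n lam
  have hq1 := GKaux.q1_eq hdec
  have hq2 := GKaux.q2_eq hdec
  have hc1 := GKaux.colEv1_eq hdec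
  have hc2 := GKaux.colEv2_eq hdec
  have hFd := GKaux.Fd_eq hdec
  refine ⟨fun j hj => GKaux.q_ge3 hdec j hj, ?_, ?_, ?_, ?_⟩
  · rw [hq1, hq2]; omega
  · rw [hc1, hc2]; omega
  · rw [hFd, hc1, hc2, pow_two]
  · rw [hFd, hc2]
    set A := (2 * n - GKaux.mr n lam + 1) / 2 with hA
    set B := (GKaux.mr n lam) / 2 with hB
    have hab : A + B = n := by omega
    rcases Nat.eq_zero_or_pos A with hA0 | hA1
    · have hBn : B = n := by omega
      rw [hA0, hBn]
      push_cast
      ring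
    · have hcast : ((A * (A - 1) + B * B : ℕ) : ℤ) = (A : ℤ) * ((A : ℤ) - 1) + (B : ℤ) * B := by
        push_cast [Nat.cast_sub hA1]
        ring
      rw [hcast]
      have hAB : (A : ℤ) = (n : ℤ) - B := by
        have : (A : ℤ) + B = n := by exact_mod_cast hab
        linarith
      rw [hAB]
      ring
end

section
/- Let λ = (λ_1,…,λ_n) ∈ ℝⁿ with λ_1 > λ_2 > … > λ_n, and let q = ᵗp(λ⁻) be the dual of the Robinson–Schensted shape of λ⁻. Then n² − n − F_d(λ⁻) = q_2^ev · (2n − 1 − 2·q_2^ev), where F_d(λ⁻) = Σ_{i≥1}(i−1)·p(λ⁻)_i^ev. -/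
set_option linter.unusedVariables false

section Main

variable (n : ℕ) (lam : ℕ → ℝ)

/-- The crosswise matching condition. -/
def good (k : ℕ) : Prop :=
  k ≤ n ∧ ∀ s, 1 ≤ s → s ≤ k → lam (n - k + s) + lam (n + 1 - s) ≤ 0

/-- Maximal matching size. -/
noncomputable def MM : ℕ := sSup {k | good n lam k}

variable {n lam}
variable (hdec : ∀ i, 1 ≤ i → i < n → lam (i + 1) < lam i)

include hdec in
lemma lam_anti : ∀ i j, 1 ≤ i → i ≤ j → j ≤ n → lam j ≤ lam i := by
  intro i j hi hij hj
  induction j with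
  | zero => omega
  | succ m ih =>
    rcases Nat.eq_or_lt_of_le hij with h | h
    · rw [h]
    · have hm : i ≤ m := by omega
      have h1 : lam (m + 1) < lam m := hdec m (by omega) (by omega)
      have := ih (by omega) (by omega)
      linarith

include hdec in
lemma lam_strict : ∀ i j, 1 ≤ i → i < j → j ≤ n → lam j < lam i := by
  intro i j hi hij hj
  have h1 : lam j < lam (j-1) := by
    have := hdec (j-1) (by omega) (by omega)
    have hj1 : j - 1 + 1 = j := by omega
    rwa [hj1] at this
  have h2 := lam_anti hdec i (j-1) hi (by omega) (by omega)
  linarith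

lemma supMinus_lo {i : ℕ} (h : i ≤ n) : supMinus n lam i = lam i := by
  simp [supMinus, h]

lemma supMinus_hi {i : ℕ} (h : n < i) : supMinus n lam i = -lam (2*n+1-i) := by
  simp [supMinus, Nat.not_le.mpr h]

include hdec in
/-- Structure of a 2-element weakly increasing pattern in `λ⁻`. -/
lemma chain_struct {i j : ℕ} (hi : 1 ≤ i) (hij : i < j) (hj : j ≤ 2*n)
    (hle : supMinus n lam i ≤ supMinus n lam j) :
    i ≤ n ∧ n < j ∧ lam i + lam (2*n+1-j) ≤ 0 := by
  by_cases hjn : j ≤ n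
  · exfalso
    rw [supMinus_lo (by omega), supMinus_lo hjn] at hle
    have := lam_strict hdec i j hi hij hjn
    linarith
  · push_neg at hjn
    by_cases hin : i ≤ n
    · refine ⟨hin, hjn, ?_⟩
      rw [supMinus_lo hin, supMinus_hi hjn] at hle
      linarith
    · exfalso
      push_neg at hin
      rw [supMinus_hi hin, supMinus_hi hjn] at hle
      have := lam_strict hdec (2*n+1-j) (2*n+1-i) (by omega) (by omega) (by omega)
      linarith

lemma good_zero : good n lam 0 := ⟨Nat.zero_le n, by omega⟩

lemma good_le {k : ℕ} (h : good n lam k) : k ≤ n := h.1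

lemma bddAbove_good : BddAbove {k | good n lam k} := ⟨n, fun k hk => good_le hk⟩

lemma good_MM : good n lam (MM n lam) := by
  have h : sSup {k | good n lam k} ∈ {k | good n lam k} :=
    Nat.sSup_mem ⟨0, Set.mem_setOf_eq ▸ (good_zero : good n lam 0)⟩ bddAbove_good
  exact h

lemma le_MM {k : ℕ} (h : good n lam k) : k ≤ MM n lam :=
  le_csSup bddAbove_good (Set.mem_setOf_eq ▸ h)

lemma MM_le : MM n lam ≤ n := good_le good_MM

end Main

section Main2
variable {n : ℕ} {lam : ℕ → ℝ}
variable (hdec : ∀ i, 1 ≤ i → i < n → lam (i + 1) < lam i)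

include hdec in
lemma greene_upper (k : ℕ) (S : Finset ℕ) (hS : ∀ i ∈ S, 1 ≤ i ∧ i ≤ 2*n)
    (f : ℕ → Fin k)
    (hf : ∀ i ∈ S, ∀ j ∈ S, i < j → f i = f j → supMinus n lam i ≤ supMinus n lam j) :
    S.card ≤ min (2*n) (k + min k (MM n lam)) := by
  classical
  have h2n : S.card ≤ 2*n := by
    have hsub : S ⊆ Finset.Icc 1 (2*n) := fun i hi => Finset.mem_Icc.mpr (hS i hi)
    have := Finset.card_le_card hsub
    rw [Nat.card_Icc] at this; omega
  set Sc : Fin k → Finset ℕ := fun c => S.filter (fun i => f i = c) with hSc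
  have hcards : S.card = ∑ c : Fin k, (Sc c).card :=
    Finset.card_eq_sum_card_fiberwise (fun x _ => Finset.mem_univ (f x))
  have hmemSc : ∀ c, ∀ i ∈ Sc c, i ∈ S ∧ f i = c := by
    intro c i hi; exact Finset.mem_filter.mp hi
  -- at most one low element and one high element per class
  have hlow : ∀ c, ((Sc c).filter (fun i => i ≤ n)).card ≤ 1 := by
    intro c
    apply Finset.card_le_one.mpr
    intro i hi j hj
    obtain ⟨hi1, hi2⟩ := Finset.mem_filter.mp hi
    obtain ⟨hj1, hj2⟩ := Finset.mem_filter.mp hj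
    obtain ⟨hiS, hic⟩ := hmemSc c i hi1
    obtain ⟨hjS, hjc⟩ := hmemSc c j hj1
    by_contra hne
    rcases Nat.lt_or_ge i j with h | h
    · have := chain_struct hdec (hS i hiS).1 h (hS j hjS).2
        (hf i hiS j hjS h (hic.trans hjc.symm))
      omega
    · have hlt : j < i := by omega
      have := chain_struct hdec (hS j hjS).1 hlt (hS i hiS).2
        (hf j hjS i hiS hlt (hjc.trans hic.symm))
      omega
  have hhigh : ∀ c, ((Sc c).filter (fun i => ¬ i ≤ n)).card ≤ 1 := by
    intro c
    apply Finset.card_le_one.mpr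
    intro i hi j hj
    obtain ⟨hi1, hi2⟩ := Finset.mem_filter.mp hi
    obtain ⟨hj1, hj2⟩ := Finset.mem_filter.mp hj
    obtain ⟨hiS, hic⟩ := hmemSc c i hi1
    obtain ⟨hjS, hjc⟩ := hmemSc c j hj1
    by_contra hne
    rcases Nat.lt_or_ge i j with h | h
    · have := chain_struct hdec (hS i hiS).1 h (hS j hjS).2
        (hf i hiS j hjS h (hic.trans hjc.symm))
      omega
    · have hlt : j < i := by omega
      have := chain_struct hdec (hS j hjS).1 hlt (hS i hiS).2
        (hf j hjS i hiS hlt (hjc.trans hic.symm))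
      omega
  have hsplit : ∀ c, ((Sc c).filter (fun i => i ≤ n)).card
      + ((Sc c).filter (fun i => ¬ i ≤ n)).card = (Sc c).card := by
    intro c; exact Finset.card_filter_add_card_filter_not (fun i => i ≤ n)
  have hSc2 : ∀ c, (Sc c).card ≤ 2 := by
    intro c; have := hlow c; have := hhigh c; have := hsplit c; omega
  set D : Finset (Fin k) := Finset.univ.filter (fun c => 2 ≤ (Sc c).card) with hD
  set d : ℕ := D.card with hd
  have hdk : d ≤ k := by
    have := Finset.card_filter_le (Finset.univ : Finset (Fin k)) (fun c => 2 ≤ (Sc c).card)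
    simpa using this
  have hcard_le : S.card ≤ k + d := by
    have hle : ∑ c : Fin k, (Sc c).card
        ≤ ∑ c : Fin k, (1 + if 2 ≤ (Sc c).card then 1 else 0) := by
      apply Finset.sum_le_sum
      intro c _
      have := hSc2 c
      split_ifs with h <;> omega
    rw [Finset.sum_add_distrib] at hle
    simp only [Finset.sum_const, Finset.card_univ, Fintype.card_fin, smul_eq_mul, mul_one,
      Finset.sum_boole] at hle
    rw [hcards]
    calc ∑ c : Fin k, (Sc c).card ≤ _ := hle
    _ ≤ k + d := by rw [hd, hD]; simp [Nat.add_le_add_iff_left]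
  -- choice of low and high representatives
  have hne : ∀ c ∈ D, ((Sc c).filter (fun i => i ≤ n)).Nonempty
      ∧ ((Sc c).filter (fun i => ¬ i ≤ n)).Nonempty := by
    intro c hc
    have h2 : 2 ≤ (Sc c).card := (Finset.mem_filter.mp hc).2
    have := hlow c; have := hhigh c; have := hsplit c
    constructor <;> (rw [← Finset.card_pos]; omega)
  set a : Fin k → ℕ := fun c =>
    if h : ((Sc c).filter (fun i => i ≤ n)).Nonempty then ((Sc c).filter (fun i => i ≤ n)).min' h
    else 0 with ha
  set b : Fin k → ℕ := fun c =>
    if h : ((Sc c).filter (fun i => ¬ i ≤ n)).Nonempty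
    then ((Sc c).filter (fun i => ¬ i ≤ n)).min' h else 0 with hb
  have pa : ∀ c ∈ D, a c ∈ S ∧ f (a c) = c ∧ 1 ≤ a c ∧ a c ≤ n := by
    intro c hc
    have h := (hne c hc).1
    have hmem := Finset.min'_mem _ h
    rw [ha]; simp only [dif_pos h]
    obtain ⟨h1, h2⟩ := Finset.mem_filter.mp hmem
    obtain ⟨h3, h4⟩ := hmemSc c _ h1
    exact ⟨h3, h4, (hS _ h3).1, h2⟩
  have pb : ∀ c ∈ D, b c ∈ S ∧ f (b c) = c ∧ n < b c ∧ b c ≤ 2*n := by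
    intro c hc
    have h := (hne c hc).2
    have hmem := Finset.min'_mem _ h
    rw [hb]; simp only [dif_pos h]
    obtain ⟨h1, h2⟩ := Finset.mem_filter.mp hmem
    obtain ⟨h3, h4⟩ := hmemSc c _ h1
    exact ⟨h3, h4, by omega, (hS _ h3).2⟩
  have pab : ∀ c ∈ D, lam (a c) + lam (2*n+1 - b c) ≤ 0 := by
    intro c hc
    obtain ⟨haS, haf, ha1, han⟩ := pa c hc
    obtain ⟨hbS, hbf, hbn, hb2n⟩ := pb c hc
    have hlt : a c < b c := by omega
    have := chain_struct hdec ha1 hlt hb2n (hf _ haS _ hbS hlt (haf.trans hbf.symm))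
    exact this.2.2
  have ainj : Set.InjOn a D := by
    intro c hc c' hc' hacc
    have h1 := (pa c hc).2.1
    have h2 := (pa c' hc').2.1
    rw [← h1, ← h2, hacc]
  have binj : Set.InjOn b D := by
    intro c hc c' hc' hacc
    have h1 := (pb c hc).2.1
    have h2 := (pb c' hc').2.1
    rw [← h1, ← h2, hacc]
  have hdn : d ≤ n := by
    have := Finset.card_le_card_of_injOn a
      (fun c hc => Finset.mem_Icc.mpr ⟨(pa c hc).2.2.1, (pa c hc).2.2.2⟩) ainj
    rw [Nat.card_Icc] at this; omega
  have hgood : good n lam d := by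
    refine ⟨hdn, ?_⟩
    intro s hs1 hs2
    -- pigeonhole
    set D1 : Finset (Fin k) := D.filter (fun c => a c ≤ n - d + s) with hD1
    set D2 : Finset (Fin k) := D.filter (fun c => 2*n+1 - b c ≤ n+1-s) with hD2
    have hn1 : (D.filter (fun c => ¬ a c ≤ n - d + s)).card ≤ d - s := by
      have hmaps : ∀ c ∈ D.filter (fun c => ¬ a c ≤ n - d + s),
          a c ∈ Finset.Icc (n - d + s + 1) n := by
        intro c hc
        obtain ⟨hcD, hcn⟩ := Finset.mem_filter.mp hc
        exact Finset.mem_Icc.mpr ⟨by omega, (pa c hcD).2.2.2⟩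
      have := Finset.card_le_card_of_injOn a hmaps
        (ainj.mono (fun c hc => (Finset.mem_filter.mp hc).1))
      rw [Nat.card_Icc] at this; omega
    have hn2 : (D.filter (fun c => ¬ 2*n+1 - b c ≤ n+1-s)).card ≤ s - 1 := by
      have hmaps : ∀ c ∈ D.filter (fun c => ¬ 2*n+1 - b c ≤ n+1-s),
          2*n+1 - b c ∈ Finset.Icc (n + 2 - s) n := by
        intro c hc
        obtain ⟨hcD, hcn⟩ := Finset.mem_filter.mp hc
        have := (pb c hcD).2.2
        exact Finset.mem_Icc.mpr ⟨by omega, by omega⟩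
      have hinj' : Set.InjOn (fun c => 2*n+1 - b c) (D.filter (fun c => ¬ 2*n+1 - b c ≤ n+1-s)) := by
        intro c hc c' hc' heq
        have hcD := (Finset.mem_filter.mp hc).1
        have hcD' := (Finset.mem_filter.mp hc').1
        have h1 := (pb c hcD).2.2
        have h2 := (pb c' hcD').2.2
        apply binj hcD hcD'
        simp only at heq
        omega
      have := Finset.card_le_card_of_injOn _ hmaps hinj'
      rw [Nat.card_Icc] at this; omega
    have hsplit1 : D1.card + (D.filter (fun c => ¬ a c ≤ n - d + s)).card = d :=
      Finset.card_filter_add_card_filter_not _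
    have hsplit2 : D2.card + (D.filter (fun c => ¬ 2*n+1 - b c ≤ n+1-s)).card = d :=
      Finset.card_filter_add_card_filter_not _
    have hunion : (D1 ∪ D2).card ≤ d := by
      apply Finset.card_le_card
      intro c hc
      rcases Finset.mem_union.mp hc with h | h
      · exact (Finset.mem_filter.mp h).1
      · exact (Finset.mem_filter.mp h).1
    have hiu := Finset.card_union_add_card_inter D1 D2
    have hinter : 0 < (D1 ∩ D2).card := by omega
    obtain ⟨c, hc⟩ := Finset.card_pos.mp hinter
    obtain ⟨hc1, hc2⟩ := Finset.mem_inter.mp hc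
    obtain ⟨hcD, hca⟩ := Finset.mem_filter.mp hc1
    have hcb := (Finset.mem_filter.mp hc2).2
    obtain ⟨haS, haf, ha1, han⟩ := pa c hcD
    obtain ⟨hbS, hbf, hbn, hb2n⟩ := pb c hcD
    have key := pab c hcD
    have l1 : lam (n - d + s) ≤ lam (a c) :=
      lam_anti hdec (a c) (n - d + s) ha1 hca (by omega)
    have l2 : lam (n + 1 - s) ≤ lam (2*n+1 - b c) :=
      lam_anti hdec (2*n+1 - b c) (n + 1 - s) (by omega) hcb (by omega)
    linarith
  have hdM : d ≤ MM n lam := le_MM hgood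
  omega

end Main2

section Main3
variable {n : ℕ} {lam : ℕ → ℝ}
variable (hdec : ∀ i, 1 ≤ i → i < n → lam (i + 1) < lam i)

set_option maxHeartbeats 2000000 in
include hdec in
lemma greene_mem (k : ℕ) (hk : 1 ≤ k) :
    ∃ S : Finset ℕ, (∀ i ∈ S, 1 ≤ i ∧ i ≤ 2*n) ∧ S.card = min (2*n) (k + min k (MM n lam)) ∧
      ∃ f : ℕ → Fin k, ∀ i ∈ S, ∀ j ∈ S, i < j → f i = f j →
        supMinus n lam i ≤ supMinus n lam j := by
  classical
  obtain ⟨M, hM⟩ : ∃ M', M' = MM n lam := ⟨_, rfl⟩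
  rw [← hM]
  have hgoodM : good n lam M := by rw [hM]; exact good_MM
  have hMn : M ≤ n := hgoodM.1
  set m : ℕ := min k M with hm
  set r : ℕ := min (k - m) (2*n - 2*m) with hr
  set r1 : ℕ := min r (n - m) with hr1
  set r2 : ℕ := r - r1 with hr2
  have hr2n : r2 ≤ n - m := by omega
  set S : Finset ℕ := (Finset.Icc (n-m+1) (n+m) ∪ Finset.Icc 1 r1)
      ∪ Finset.Icc (n+m+1) (n+m+r2) with hS
  have hmemS : ∀ i, i ∈ S ↔ ((n-m+1 ≤ i ∧ i ≤ n+m) ∨ (1 ≤ i ∧ i ≤ r1)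
      ∨ (n+m+1 ≤ i ∧ i ≤ n+m+r2)) := by
    intro i
    simp only [hS, Finset.mem_union, Finset.mem_Icc]
    tauto
  refine ⟨S, ?_, ?_, ?_⟩
  · intro i hi
    rw [hmemS] at hi
    omega
  · have hd1 : Disjoint (Finset.Icc (n-m+1) (n+m)) (Finset.Icc 1 r1) := by
      rw [Finset.disjoint_left]
      intro i h1 h2
      rw [Finset.mem_Icc] at h1 h2
      omega
    have hd2 : Disjoint ((Finset.Icc (n-m+1) (n+m)) ∪ Finset.Icc 1 r1)
        (Finset.Icc (n+m+1) (n+m+r2)) := by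
      rw [Finset.disjoint_left]
      intro i h1 h2
      rw [Finset.mem_union, Finset.mem_Icc, Finset.mem_Icc] at h1
      rw [Finset.mem_Icc] at h2
      omega
    rw [hS, Finset.card_union_of_disjoint hd2, Finset.card_union_of_disjoint hd1]
    rw [Nat.card_Icc, Nat.card_Icc, Nat.card_Icc]
    omega
  · set g : ℕ → ℕ := fun i =>
      if i ≤ n - m then m + (i - 1)
      else if i ≤ n then i - (n - m) - 1
      else if i ≤ n + m then i - n - 1
      else m + r1 + (i - (n+m) - 1) with hg
    have hgval : ∀ i ∈ S, ((1 ≤ i ∧ i ≤ r1) ∧ g i = m + (i-1))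
        ∨ ((n-m+1 ≤ i ∧ i ≤ n) ∧ g i = i - (n-m) - 1)
        ∨ ((n+1 ≤ i ∧ i ≤ n+m) ∧ g i = i - n - 1)
        ∨ ((n+m+1 ≤ i ∧ i ≤ n+m+r2) ∧ g i = m + r1 + (i - (n+m) - 1)) := by
      intro i hi
      rw [hmemS] at hi
      simp only [hg]
      split_ifs with h1 h2 h3 <;> omega
    have hgbound : ∀ i ∈ S, g i ≤ k - 1 := by
      intro i hi
      rcases hgval i hi with ⟨h, he⟩ | ⟨h, he⟩ | ⟨h, he⟩ | ⟨h, he⟩ <;> omega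
    refine ⟨fun i => ⟨min (g i) (k-1), by omega⟩, ?_⟩
    intro i hiS j hjS hij hfij
    have h3 : min (g i) (k-1) = min (g j) (k-1) := congrArg Fin.val hfij
    clear hfij
    have hgeq : g i = g j := by
      have h1 := hgbound i hiS
      have h2 := hgbound j hjS
      omega
    have Hi := hgval i hiS
    have Hj := hgval j hjS
    by_cases hmain : (n-m+1 ≤ i ∧ i ≤ n) ∧ (n+1 ≤ j ∧ j ≤ n+m)
    · obtain ⟨⟨hi1, hi2⟩, hj1, hj2⟩ := hmain
      set s : ℕ := i - (n-m) with hs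
      have hs1 : 1 ≤ s := by omega
      have hs2 : s ≤ m := by omega
      have hjv : j = n + s := by omega
      rw [supMinus_lo hi2, supMinus_hi (by omega : n < j)]
      have harg : 2*n+1-j = n+1-s := by omega
      have h0 := hgoodM.2 s hs1 (by omega : s ≤ M)
      have hmono : lam i ≤ lam (n - M + s) := by
        rcases Nat.eq_or_lt_of_le (by omega : n - M + s ≤ i) with h | h
        · rw [h]
        · exact le_of_lt (lam_strict hdec _ _ (by omega) h (by omega))
      rw [harg]
      linarith
    · exfalso
      omega

end Main3

section Main4
variable {n : ℕ} {lam : ℕ → ℝ}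
variable (hdec : ∀ i, 1 ≤ i → i < n → lam (i + 1) < lam i)

include hdec in
lemma greene_eval (k : ℕ) :
    greeneC (2*n) (supMinus n lam) k = min (2*n) (k + min k (MM n lam)) := by
  rcases Nat.eq_zero_or_pos k with rfl | hk
  · have hempty : {m : ℕ | ∃ S : Finset ℕ, (∀ i ∈ S, 1 ≤ i ∧ i ≤ 2*n) ∧ m = S.card ∧
        ∃ f : ℕ → Fin 0, ∀ i ∈ S, ∀ j ∈ S, i < j → f i = f j →
          supMinus n lam i ≤ supMinus n lam j} = ∅ := by
      ext m
      simp only [Set.mem_setOf_eq, Set.mem_empty_iff_false, iff_false]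
      rintro ⟨S, hS, hm, f, hf⟩
      exact (f 0).elim0
    rw [greeneC, hempty]
    simp
  · have hub : ∀ m ∈ {m : ℕ | ∃ S : Finset ℕ, (∀ i ∈ S, 1 ≤ i ∧ i ≤ 2*n) ∧ m = S.card ∧
        ∃ f : ℕ → Fin k, ∀ i ∈ S, ∀ j ∈ S, i < j → f i = f j →
          supMinus n lam i ≤ supMinus n lam j}, m ≤ min (2*n) (k + min k (MM n lam)) := by
      rintro m ⟨S, hS, rfl, f, hf⟩
      exact greene_upper hdec k S hS f hf
    obtain ⟨S, h1, h2, f, hf⟩ := greene_mem hdec k hk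
    have hmem : min (2*n) (k + min k (MM n lam)) ∈ {m : ℕ | ∃ S : Finset ℕ,
        (∀ i ∈ S, 1 ≤ i ∧ i ≤ 2*n) ∧ m = S.card ∧
        ∃ f : ℕ → Fin k, ∀ i ∈ S, ∀ j ∈ S, i < j → f i = f j →
          supMinus n lam i ≤ supMinus n lam j} := ⟨S, h1, h2.symm, f, hf⟩
    rw [greeneC]
    exact le_antisymm (csSup_le ⟨_, hmem⟩ hub)
      (le_csSup ⟨min (2*n) (k + min k (MM n lam)), hub⟩ hmem)

include hdec in
lemma pShape_eval (k : ℕ) :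
    pShape n lam k = if k = 0 then 0 else if k ≤ MM n lam then 2
      else if k ≤ 2*n - MM n lam then 1 else 0 := by
  have h1 := greene_eval hdec k
  have h2 := greene_eval hdec (k-1)
  have hMn : MM n lam ≤ n := MM_le
  rw [pShape, rsShape, h1, h2]
  split_ifs <;> omega

include hdec in
lemma qShape_eval : qShape n lam 2 = MM n lam := by
  have hset : {i : ℕ | 1 ≤ i ∧ 2 ≤ pShape n lam i} = ↑(Finset.Icc 1 (MM n lam)) := by
    ext i
    simp only [Set.mem_setOf_eq, Finset.coe_Icc, Set.mem_Icc]
    rw [pShape_eval hdec i]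
    split_ifs <;> omega
  rw [qShape, dualPart, hset, Set.ncard_coe_finset, Nat.card_Icc]
  omega

lemma count_even (b : ℕ) :
    ((Finset.Icc 1 b).filter fun i => Even (i + 2)).card = b / 2 := by
  induction b with
  | zero => simp
  | succ b ih =>
    rw [show Finset.Icc 1 (b+1) = insert (b+1) (Finset.Icc 1 b) by
      ext i; simp [Finset.mem_Icc]; omega]
    rw [Finset.filter_insert]
    by_cases h : Even (b + 1 + 2)
    · rw [if_pos h, Finset.card_insert_of_notMem (by
        intro hmem
        have := Finset.mem_Icc.mp (Finset.mem_filter.mp hmem).1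
        omega), ih]
      rw [Nat.even_iff] at h
      omega
    · rw [if_neg h, ih]
      rw [Nat.even_iff] at h
      omega

include hdec in
lemma colEv_eval : colEv (qShape n lam) 2 = MM n lam / 2 := by
  rw [colEv, qShape_eval hdec, count_even]

end Main4

def Asum (b : ℕ) : ℕ := ∑ i ∈ Finset.Ioc 0 b, (i - 1)

def Bsum (b : ℕ) : ℕ := ∑ i ∈ Finset.Ioc 0 b, (i - 1) * (if Even (i + 1) then 1 else 0)

lemma Asum_closed (b : ℕ) : 2 * Asum b + b = b * b := by
  induction b with
  | zero => simp [Asum]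
  | succ b ih =>
    have h : Asum (b+1) = Asum b + b := by
      rw [Asum, Asum, Finset.sum_Ioc_succ_top (Nat.zero_le _)]
      omega
    rw [h]
    ring_nf
    ring_nf at ih
    omega

lemma Bsum_closed (b : ℕ) : 4 * Bsum b + 2 * (b + b % 2) = (b + b % 2) * (b + b % 2) := by
  induction b with
  | zero => simp [Bsum]
  | succ b ih =>
    have h : Bsum (b+1) = Bsum b + (b + 1 - 1) * (if Even (b + 1 + 1) then 1 else 0) := by
      rw [Bsum, Bsum, Finset.sum_Ioc_succ_top (Nat.zero_le _)]
    rcases Nat.even_or_odd b with he | ho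
    · obtain ⟨c, hc⟩ := he
      subst hc
      have h1 : Even (c + c + 1 + 1) := by rw [Nat.even_iff]; omega
      rw [if_pos h1] at h
      have h2 : (c + c) % 2 = 0 := by omega
      have h3 : (c + c + 1) % 2 = 1 := by omega
      rw [h2] at ih
      rw [h, h3]
      simp only [Nat.add_sub_cancel, Nat.mul_one]
      ring_nf
      ring_nf at ih
      linarith [ih]
    · obtain ⟨c, hc⟩ := ho
      subst hc
      have h1 : ¬ Even (2 * c + 1 + 1 + 1) := by rw [Nat.even_iff]; omega
      rw [if_neg h1] at h
      have h2 : (2 * c + 1) % 2 = 1 := by omega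
      have h3 : (2 * c + 1 + 1) % 2 = 0 := by omega
      rw [h2] at ih
      rw [h, h3]
      simp only [Nat.add_sub_cancel, Nat.mul_zero, Nat.add_zero]
      ring_nf
      ring_nf at ih
      linarith [ih]

section Main5
variable {n : ℕ} {lam : ℕ → ℝ}
variable (hdec : ∀ i, 1 ≤ i → i < n → lam (i + 1) < lam i)

lemma rowEv_of_two {p : ℕ → ℕ} {i : ℕ} (h : p i = 2) : rowEv p i = 1 := by
  rw [rowEv, h]
  rw [show Finset.Icc 1 2 = {1, 2} from rfl]
  rcases Nat.even_or_odd i with he | ho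
  · have h1 : ¬ Even (i + 1) := by rw [Nat.even_iff] at *; omega
    have h2 : Even (i + 2) := by rw [Nat.even_iff] at *; omega
    rw [Finset.filter_insert, if_neg h1, Finset.filter_singleton, if_pos h2]
    rfl
  · have h1 : Even (i + 1) := by rw [Nat.even_iff] at *; rw [Nat.odd_iff] at ho; omega
    have h2 : ¬ Even (i + 2) := by rw [Nat.even_iff] at *; rw [Nat.odd_iff] at ho; omega
    rw [Finset.filter_insert, if_pos h1, Finset.filter_singleton, if_neg h2]
    rfl

lemma rowEv_of_one {p : ℕ → ℕ} {i : ℕ} (h : p i = 1) :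
    rowEv p i = if Even (i + 1) then 1 else 0 := by
  rw [rowEv, h]
  rw [show Finset.Icc 1 1 = {1} from rfl, Finset.filter_singleton]
  split_ifs <;> simp

lemma rowEv_of_zero {p : ℕ → ℕ} {i : ℕ} (h : p i = 0) : rowEv p i = 0 := by
  rw [rowEv, h]
  simp

include hdec in
lemma Fd_eval : Fd n lam + Bsum (MM n lam) = Asum (MM n lam) + Bsum (2*n - MM n lam) := by
  have hMn : MM n lam ≤ n := MM_le
  set M : ℕ := MM n lam with hM
  have hFd : Fd n lam = ∑ i ∈ Finset.Ioc 0 (2*n), (i - 1) * rowEv (pShape n lam) i := by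
    rw [Fd]
    apply finsum_cond_eq_sum_of_cond_iff
    intro x hx
    simp only [Finset.mem_Ioc]
    constructor
    · intro h1
      refine ⟨by omega, ?_⟩
      by_contra hgt
      push_neg at hgt
      have hp : pShape n lam x = 0 := by
        rw [pShape_eval hdec x]
        split_ifs <;> omega
      rw [rowEv_of_zero hp, Nat.mul_zero] at hx
      exact hx rfl
    · intro h1; omega
  have h1 : ∑ i ∈ Finset.Ioc 0 M, (i - 1) * rowEv (pShape n lam) i
      = ∑ i ∈ Finset.Ioc 0 M, (i - 1) := by
    apply Finset.sum_congr rfl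
    intro i hi
    rw [Finset.mem_Ioc] at hi
    have hp : pShape n lam i = 2 := by
      rw [pShape_eval hdec i]; split_ifs <;> omega
    rw [rowEv_of_two hp, Nat.mul_one]
  have h2 : ∑ i ∈ Finset.Ioc M (2*n - M), (i - 1) * rowEv (pShape n lam) i
      = ∑ i ∈ Finset.Ioc M (2*n - M), (i - 1) * (if Even (i + 1) then 1 else 0) := by
    apply Finset.sum_congr rfl
    intro i hi
    rw [Finset.mem_Ioc] at hi
    have hp : pShape n lam i = 1 := by
      rw [pShape_eval hdec i]; split_ifs <;> omega
    rw [rowEv_of_one hp]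
  have h3 : ∑ i ∈ Finset.Ioc (2*n - M) (2*n), (i - 1) * rowEv (pShape n lam) i = 0 := by
    apply Finset.sum_eq_zero
    intro i hi
    rw [Finset.mem_Ioc] at hi
    have hp : pShape n lam i = 0 := by
      rw [pShape_eval hdec i]; split_ifs <;> omega
    rw [rowEv_of_zero hp, Nat.mul_zero]
  have e1 : (∑ i ∈ Finset.Ioc 0 M, (i - 1) * rowEv (pShape n lam) i)
      + ∑ i ∈ Finset.Ioc M (2*n - M), (i - 1) * rowEv (pShape n lam) i
      = ∑ i ∈ Finset.Ioc 0 (2*n - M), (i - 1) * rowEv (pShape n lam) i :=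
    Finset.sum_Ioc_consecutive _ (Nat.zero_le M) (by omega : M ≤ 2*n - M)
  have e2 : (∑ i ∈ Finset.Ioc 0 (2*n - M), (i - 1) * rowEv (pShape n lam) i)
      + ∑ i ∈ Finset.Ioc (2*n - M) (2*n), (i - 1) * rowEv (pShape n lam) i
      = ∑ i ∈ Finset.Ioc 0 (2*n), (i - 1) * rowEv (pShape n lam) i :=
    Finset.sum_Ioc_consecutive _ (Nat.zero_le (2*n - M)) (by omega : 2*n - M ≤ 2*n)
  have e3 : (∑ i ∈ Finset.Ioc 0 M, (i - 1) * (if Even (i + 1) then 1 else 0))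
      + ∑ i ∈ Finset.Ioc M (2*n - M), (i - 1) * (if Even (i + 1) then 1 else 0)
      = ∑ i ∈ Finset.Ioc 0 (2*n - M), (i - 1) * (if Even (i + 1) then 1 else 0) :=
    Finset.sum_Ioc_consecutive _ (Nat.zero_le M) (by omega : M ≤ 2*n - M)
  rw [hFd]
  rw [Bsum, Bsum, Asum]
  omega

end Main5


/-- for `λ_1 > … > λ_n`, with `q = ᵗp(λ⁻)`:
`n² − n − F_d(λ⁻) = q_2^ev(2n − 1 − 2q_2^ev)`. -/
theorem gkdim_formula_so_star (n : ℕ) (lam : ℕ → ℝ)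
    (hdec : ∀ i, 1 ≤ i → i < n → lam (i + 1) < lam i) :
    (n : ℤ) ^ 2 - (n : ℤ) - (Fd n lam : ℤ) =
      (colEv (qShape n lam) 2 : ℤ) *
        (2 * (n : ℤ) - 1 - 2 * (colEv (qShape n lam) 2 : ℤ)) := by
  have hMn : MM n lam ≤ n := MM_le
  obtain ⟨M, hM⟩ : ∃ M', M' = MM n lam := ⟨_, rfl⟩
  have hcol : colEv (qShape n lam) 2 = M / 2 := by rw [hM]; exact colEv_eval hdec
  have hFd : Fd n lam + Bsum M = Asum M + Bsum (2*n - M) := by rw [hM]; exact Fd_eval hdec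
  rw [← hM] at hMn
  have hA := Asum_closed M
  have hB1 := Bsum_closed M
  have hB2 := Bsum_closed (2*n - M)
  rw [hcol]
  rcases Nat.even_or_odd M with he | ho
  · obtain ⟨c, rfl⟩ := he
    obtain ⟨e, rfl⟩ : ∃ e, n = c + e := ⟨n - c, by omega⟩
    have hd : (c + c) / 2 = c := by omega
    have hsub : 2 * (c + e) - (c + c) = e + e := by omega
    rw [hsub] at hFd hB2
    rw [hd]
    have hm1 : (c + c) % 2 = 0 := by omega
    have hm2 : (e + e) % 2 = 0 := by omega
    rw [hm1] at hB1
    rw [hm2] at hB2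
    zify at hFd hA hB1 hB2
    push_cast
    ring_nf
    ring_nf at hFd hA hB1 hB2
    linarith [hFd, hA, hB1, hB2]
  · obtain ⟨c, rfl⟩ := ho
    obtain ⟨e, rfl⟩ : ∃ e, n = c + 1 + e := ⟨n - c - 1, by omega⟩
    have hd : (2 * c + 1) / 2 = c := by omega
    have hsub : 2 * (c + 1 + e) - (2 * c + 1) = 2 * e + 1 := by omega
    rw [hsub] at hFd hB2
    rw [hd]
    have hm1 : (2 * c + 1) % 2 = 1 := by omega
    have hm2 : (2 * e + 1) % 2 = 1 := by omega
    rw [hm1] at hB1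
    rw [hm2] at hB2
    zify at hFd hA hB1 hB2
    push_cast
    ring_nf
    ring_nf at hFd hA hB1 hB2
    linarith [hFd, hA, hB1, hB2]
end
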